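/- arXiv:1203.1572 — 4 statements merged into one kernel-verified Lean document; each statement's English description precedes it below -/
import Mathlib

section
/- Let F be a field, I a finite set with a linear order ℓ, and S ⊆ I. The map sending an upper ℓ-unitriangular matrix U to its principal minor U_S (the submatrix with rows and columns indexed by S) is a group homomorphism from U(I,ℓ) to U(S,ℓ|_S) if and only if S is an ℓ-segment (i.e., whenever i, k ∈ S and i <_ℓ j <_ℓ k, then j ∈ S). -/
/-- `U` is upper unitriangular with respect to the linear order on `I`. -/
def IsUni {I F : Type*} [LinearOrder I] [Zero F] [One F] (U : Matrix I I F) : Prop :=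
  (∀ i, U i i = 1) ∧ ∀ i j : I, j < i → U i j = 0

/-- The principal minor of `U` indexed by `S`. -/
def pminor {I F : Type*} (U : Matrix I I F) (S : Finset I) :
    Matrix {x // x ∈ S} {x // x ∈ S} F :=
  Matrix.of fun i j => U i.1 j.1

/-- Taking the principal minor indexed by `S` is a group homomorphism
`U(I,ℓ) → U(S,ℓ|_S)` if and only if `S` is an `ℓ`-segment. -/
theorem minor_mul_hom_iff_segment {I : Type*} [Fintype I] [LinearOrder I]
    (F : Type*) [Field F] (S : Finset I) :
    (∀ U V : Matrix I I F, IsUni U → IsUni V →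
        pminor (U * V) S = pminor U S * pminor V S) ↔
      (∀ i j k : I, i ∈ S → k ∈ S → i < j → j < k → j ∈ S) := by
  constructor
  · intro h i j k hi hk hij hjk
    by_contra hj
    set U : Matrix I I F := 1 + Matrix.single i j 1 with hUdef
    set V : Matrix I I F := 1 + Matrix.single j k 1 with hVdef
    have hUuni : IsUni U := by
      constructor
      · intro a
        simp only [hUdef, Matrix.add_apply, Matrix.one_apply_eq,
          Matrix.single, Matrix.of_apply]
        rw [if_neg, add_zero]
        rintro ⟨rfl, rfl⟩
        exact absurd rfl hij.ne
      · intro a b hba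
        simp only [hUdef, Matrix.add_apply, Matrix.one_apply,
          Matrix.single, Matrix.of_apply]
        rw [if_neg hba.ne', if_neg, add_zero]
        rintro ⟨rfl, rfl⟩
        exact absurd hba (not_lt_of_gt hij)
    have hVuni : IsUni V := by
      constructor
      · intro a
        simp only [hVdef, Matrix.add_apply, Matrix.one_apply_eq,
          Matrix.single, Matrix.of_apply]
        rw [if_neg, add_zero]
        rintro ⟨rfl, rfl⟩
        exact absurd rfl hjk.ne
      · intro a b hba
        simp only [hVdef, Matrix.add_apply, Matrix.one_apply,
          Matrix.single, Matrix.of_apply]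
        rw [if_neg hba.ne', if_neg, add_zero]
        rintro ⟨rfl, rfl⟩
        exact absurd hba (not_lt_of_gt hjk)
    have key := congrArg (fun M => M ⟨i, hi⟩ ⟨k, hk⟩) (h U V hUuni hVuni)
    simp only [pminor, Matrix.of_apply, Matrix.mul_apply] at key
    have hik : i ≠ k := (hij.trans hjk).ne
    have hUval : ∀ b : I, U i b = (if b = i then 1 else 0) + (if b = j then 1 else 0) := by
      intro b
      by_cases hb : b = j
      · subst hb
        simp [hUdef, Matrix.add_apply, Matrix.one_apply, Matrix.single,
          hij.ne, hij.ne']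
      · simp [hUdef, Matrix.add_apply, Matrix.one_apply, Matrix.single,
          hb, Ne.symm hb, eq_comm]
    have hVval : ∀ b : I, V b k = (if b = k then 1 else 0) + (if b = j then 1 else 0) := by
      intro b
      by_cases hb : b = j
      · subst hb
        simp [hVdef, Matrix.add_apply, Matrix.one_apply, Matrix.single,
          hjk.ne, hjk.ne']
      · simp [hVdef, Matrix.add_apply, Matrix.one_apply, Matrix.single,
          hb, Ne.symm hb, eq_comm]
    have hL : (∑ x : I, U i x * V x k) = 1 := by
      rw [Finset.sum_eq_single j]
      · rw [hUval, hVval]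
        simp [hij.ne', hjk.ne, hik]
      · intro b _ hbj
        rw [hUval, hVval]
        rcases eq_or_ne b i with rfl | hbi
        · simp [hbj, hik.symm, hik]
        · simp [hbj, hbi]
      · intro hja
        exact absurd (Finset.mem_univ j) hja
    have hR : (∑ x : {x // x ∈ S}, U i x.1 * V x.1 k) = 0 := by
      apply Finset.sum_eq_zero
      intro x _
      have hxj : x.1 ≠ j := fun hh => hj (hh ▸ x.2)
      rw [hUval, hVval]
      rcases eq_or_ne x.1 i with hxi | hxi
      · simp [hxj, hxi, hik.symm, hik, hij.ne, hij.ne']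
      · simp [hxj, hxi]
    rw [hL, hR] at key
    exact one_ne_zero key
  · intro hseg U V hU hV
    ext a b
    simp only [pminor, Matrix.of_apply, Matrix.mul_apply]
    rw [Finset.sum_coe_sort S (fun x => U a.1 x * V x b.1)]
    symm
    apply Finset.sum_subset (Finset.subset_univ S)
    intro x _ hx
    rcases lt_or_ge x a.1 with h1 | h1
    · rw [hU.2 a.1 x h1, zero_mul]
    · rcases lt_or_ge b.1 x with h2 | h2
      · rw [hV.2 x b.1 h2, mul_zero]
      · rcases eq_or_lt_of_le h1 with rfl | h1'
        · exact absurd a.2 hx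
        · rcases eq_or_lt_of_le h2 with hxb | h2'
          · exact absurd (hxb ▸ b.2) hx
          · exact absurd (hseg a.1 x b.1 a.2 b.2 h1' h2') hx
end

section
/- Every superclass in the unitriangular group U(I,ℓ) over a finite field contains a unique matrix U such that U − Id has at most one nonzero entry in each row and in each column. -/
/-- The superclass relation on the unitriangular group:
`U ∼ V` iff `V - Id = g (U - Id) h` for some unitriangular `g, h`. -/
def matScRel {I F : Type*} [Fintype I] [LinearOrder I] [Field F]
    (U V : Matrix I I F) : Prop :=
  ∃ g h : Matrix I I F, IsUni g ∧ IsUni h ∧ V - 1 = g * (U - 1) * h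

set_option linter.unusedSectionVars false

section Dev
variable {I F : Type*} [Fintype I] [LinearOrder I] [Field F]

/-- strictly upper triangular -/
def SU (a : Matrix I I F) : Prop := ∀ i j : I, ¬ i < j → a i j = 0

def Mono (a : Matrix I I F) : Prop :=
  (∀ i j j' : I, a i j ≠ 0 → a i j' ≠ 0 → j = j') ∧
  (∀ i i' j : I, a i j ≠ 0 → a i' j ≠ 0 → i = i')

theorem IsUni.ne {g : Matrix I I F} (hg : IsUni g) {i j : I} (h : g i j ≠ 0) : i ≤ j :=
  not_lt.1 fun hc => h (hg.2 i j hc)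

theorem SU.ne {a : Matrix I I F} (ha : SU a) {i j : I} (h : a i j ≠ 0) : i < j :=
  not_le.1 fun hc => h (ha i j (not_lt.2 hc))

theorem isUni_iff_SU_sub_one {U : Matrix I I F} : IsUni U ↔ SU (U - 1) := by
  constructor
  · rintro ⟨h1, h2⟩ i j hij
    rcases eq_or_ne i j with rfl | hne
    · simp [h1 i]
    · simp [Matrix.one_apply_ne' (Ne.symm hne), h2 i j (lt_of_le_of_ne (not_lt.1 hij) (Ne.symm hne))]
  · intro h
    constructor
    · intro i
      have := h i i (lt_irrefl i)
      simpa [sub_eq_zero] using this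
    · intro i j hij
      have := h i j (not_lt.2 hij.le)
      simpa [Matrix.one_apply_ne' (ne_of_lt hij)] using this

theorem SU.add {a b : Matrix I I F} (ha : SU a) (hb : SU b) : SU (a + b) := by
  intro i j h; simp [Matrix.add_apply, ha i j h, hb i j h]

theorem isUni_one : IsUni (1 : Matrix I I F) :=
  ⟨fun i => Matrix.one_apply_eq i, fun i j h => Matrix.one_apply_ne' (ne_of_lt h)⟩

theorem isUni_one_add_SU {e : Matrix I I F} (he : SU e) : IsUni (1 + e) := by
  constructor
  · intro i; simp [Matrix.add_apply, he i i (lt_irrefl i)]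
  · intro i j h; simp [Matrix.add_apply, he i j (asymm h), Matrix.one_apply_ne' (ne_of_lt h)]

theorem IsUni.mul {g h : Matrix I I F} (hg : IsUni g) (hh : IsUni h) : IsUni (g * h) := by
  constructor
  · intro i
    rw [Matrix.mul_apply]
    rw [Finset.sum_eq_single i]
    · simp [hg.1, hh.1]
    · intro k _ hk
      rcases lt_or_gt_of_ne hk with hlt | hlt
      · simp [hg.2 i k hlt]
      · simp [hh.2 k i hlt]
    · simp
  · intro i j hij
    rw [Matrix.mul_apply]
    apply Finset.sum_eq_zero
    intro k _
    by_cases hk : k < i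
    · simp [hg.2 _ _ hk]
    · have : j < k := lt_of_lt_of_le hij (not_lt.1 hk)
      simp [hh.2 _ _ this]

theorem IsUni.blockTriangular {g : Matrix I I F} (hg : IsUni g) :
    g.BlockTriangular id := by
  intro i j h
  exact hg.2 i j h

theorem IsUni.det_eq_one {g : Matrix I I F} [DecidableEq I] (hg : IsUni g) : g.det = 1 := by
  rw [Matrix.det_of_upperTriangular hg.blockTriangular]
  simp [hg.1]

theorem IsUni.exists_inv {g : Matrix I I F} (hg : IsUni g) :
    ∃ g' : Matrix I I F, IsUni g' ∧ g' * g = 1 ∧ g * g' = 1 := by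
  classical
  have hu : IsUnit g.det := by simp [hg.det_eq_one]
  have hinv1 : g * g⁻¹ = 1 := Matrix.mul_nonsing_inv g hu
  have hinv2 : g⁻¹ * g = 1 := Matrix.nonsing_inv_mul g hu
  haveI : Invertible g := g.invertibleOfIsUnitDet hu
  have hbt : g⁻¹.BlockTriangular id := Matrix.blockTriangular_inv_of_blockTriangular hg.blockTriangular
  refine ⟨g⁻¹, ⟨?_, fun i j h => hbt h⟩, hinv2, hinv1⟩
  -- diagonal of inverse is 1
  intro i
  have := congrArg (fun M => M i i) hinv1
  simp only [Matrix.mul_apply, Matrix.one_apply_eq] at this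
  rw [Finset.sum_eq_single i] at this
  · rw [hg.1 i, one_mul] at this; exact this
  · intro k _ hk
    rcases lt_or_gt_of_ne hk with hlt | hlt
    · simp [hg.2 i k hlt]
    · simp [hbt (show id i < id k from hlt)]
  · simp

theorem IsUni.mul_SU {g a : Matrix I I F} (hg : IsUni g) (ha : SU a) : SU (g * a) := by
  intro i j hij
  rw [Matrix.mul_apply]
  apply Finset.sum_eq_zero
  intro x _
  by_cases hx : x < j
  · have : x < i := lt_of_lt_of_le hx (not_lt.1 hij)
    simp [hg.2 i x this]
  · simp [ha x j hx]

theorem SU.mul_uni {a h : Matrix I I F} (ha : SU a) (hh : IsUni h) : SU (a * h) := by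
  intro i j hij
  rw [Matrix.mul_apply]
  apply Finset.sum_eq_zero
  intro x _
  by_cases hx : i < x
  · have : j < x := lt_of_le_of_lt (not_lt.1 hij) hx
    simp [hh.2 x j this]
  · simp [ha i x hx]

/-- determinant of a matrix which is triangular with respect to an injection into `I`
and has unit diagonal. -/
theorem det_eq_one_of_triangular_inj {α : Type*} [Fintype α] [DecidableEq α]
    (M : Matrix α α F) (f : α → I) (hf : Function.Injective f)
    (htri : ∀ x y, M x y ≠ 0 → f x ≤ f y) (hdiag : ∀ x, M x x = 1) : M.det = 1 := by
  classical
  rw [Matrix.det_apply]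
  rw [Finset.sum_eq_single 1]
  · simp [hdiag]
  · intro σ _ hσ
    have hz : ∃ x, M (σ x) x = 0 := by
      by_contra hc
      push_neg at hc
      have hle : ∀ x, f (σ x) ≤ f x := fun x => htri _ _ (hc x)
      set e : I ≃o Fin (Fintype.card I) := (monoEquivOfFin I rfl).symm with he
      set g : α → ℕ := fun x => (e (f x) : ℕ) with hgdef
      have hgle : ∀ x, g (σ x) ≤ g x := by
        intro x
        exact e.monotone (hle x)
      have hsum : ∑ x, g (σ x) = ∑ x, g x := Equiv.sum_comp σ g
      have heq : ∀ x ∈ Finset.univ, g (σ x) = g x := by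
        rw [← Finset.sum_eq_sum_iff_of_le (fun x _ => hgle x)]
        exact hsum
      have : σ = 1 := by
        ext x
        have hx := heq x (Finset.mem_univ x)
        have : f (σ x) = f x := by
          have := Fin.val_injective hx
          exact e.injective this
        exact hf this
      exact hσ this
    obtain ⟨x, hx⟩ := hz
    have hz2 : (∏ i : α, M (σ i) i) = 0 := Finset.prod_eq_zero (Finset.mem_univ x) hx
    rw [hz2, smul_zero]
  · simp

open scoped Classical in
/-- the column of the pivot in row `k` (junk value `k` if row is zero). -/
noncomputable def pivCol (m : Matrix I I F) (k : I) : I :=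
  if h : ∃ l, m k l ≠ 0 then h.choose else k

theorem pivCol_spec {m : Matrix I I F} {k : I} (h : ∃ l, m k l ≠ 0) :
    m k (pivCol m k) ≠ 0 := by
  rw [pivCol, dif_pos h]
  exact h.choose_spec

theorem pivCol_eq {m : Matrix I I F} (hm : Mono m) {k l : I} (h : m k l ≠ 0) :
    pivCol m k = l :=
  hm.1 k _ l (pivCol_spec ⟨l, h⟩) h

open scoped Classical in
/-- the set of pivot rows of `m` inside the corner given by `p` (rows) and `q` (columns). -/
noncomputable def Krows (m : Matrix I I F) (p q : I → Prop) : Finset I :=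
  Finset.univ.filter (fun k => p k ∧ ∃ l, q l ∧ m k l ≠ 0)

theorem mem_Krows {m : Matrix I I F} {p q : I → Prop} {k : I} :
    k ∈ Krows m p q ↔ p k ∧ ∃ l, q l ∧ m k l ≠ 0 := by
  classical
  simp [Krows]

theorem pivCol_mem_q {m : Matrix I I F} (hm : Mono m) {p q : I → Prop} {k : I}
    (hk : k ∈ Krows m p q) : q (pivCol m k) := by
  obtain ⟨-, l, hql, hne⟩ := mem_Krows.1 hk
  rwa [pivCol_eq hm hne]

theorem collapse {G m H : Matrix I I F} (hm : Mono m) (hG : IsUni G) (hH : IsUni H)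
    {p q : I → Prop} (hp : ∀ a b, p a → a ≤ b → p b) (hq : ∀ a b, q a → b ≤ a → q b)
    {k0 l0 : I} (hk0 : p k0) (hl0 : q l0) :
    (G * m * H) k0 l0 =
      ∑ x ∈ Krows m p q, G k0 x * m x (pivCol m x) * H (pivCol m x) l0 := by
  classical
  have expand : (G * m * H) k0 l0 = ∑ x : I, ∑ y : I, G k0 x * m x y * H y l0 := by
    rw [Matrix.mul_apply]
    rw [Finset.sum_comm]
    apply Finset.sum_congr rfl
    intro y _
    rw [Matrix.mul_apply, Finset.sum_mul]
  rw [expand]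
  rw [← Finset.sum_subset (Finset.subset_univ (Krows m p q))]
  · apply Finset.sum_congr rfl
    intro x hx
    obtain ⟨hpx, l, hql, hne⟩ := mem_Krows.1 hx
    apply Finset.sum_eq_single (pivCol m x)
    · intro y _ hy
      have : m x y = 0 := by
        by_contra hc
        exact hy (hm.1 x _ _ hc (pivCol_spec ⟨l, hne⟩)) |>.elim
      · simp [this]
    · simp
  · intro x _ hx
    apply Finset.sum_eq_zero
    intro y _
    by_contra hc
    have h1 : G k0 x ≠ 0 := fun h => hc (by simp [h])
    have h2 : m x y ≠ 0 := fun h => hc (by simp [h])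
    have h3 : H y l0 ≠ 0 := fun h => hc (by simp [h])
    exact hx (mem_Krows.2 ⟨hp _ _ hk0 (hG.ne h1), y, hq _ _ hl0 (hH.ne h3), h2⟩)

theorem card_Krows_le {G m m' H : Matrix I I F} (hm : Mono m) (hm' : Mono m')
    (hG : IsUni G) (hH : IsUni H) (hrel : m' = G * m * H)
    {p q : I → Prop} (hp : ∀ a b, p a → a ≤ b → p b) (hq : ∀ a b, q a → b ≤ a → q b) :
    (Krows m' p q).card ≤ (Krows m p q).card := by
  classical
  set K' := Krows m' p q with hK'
  set K := Krows m p q with hK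
  set π := pivCol m
  set π' := pivCol m'
  set Φ : Matrix ↥K' ↥K' F := Matrix.of fun k k' => m' k.1 (π' k'.1) with hΦdef
  set X : Matrix ↥K' ↥K F := Matrix.of fun k x => G k.1 x.1 * m x.1 (π x.1) with hX
  set Y : Matrix ↥K ↥K' F := Matrix.of fun x k' => H (π x.1) (π' k'.1) with hY
  have hfact : Φ = X * Y := by
    ext k k'
    have hpk : p k.1 := (mem_Krows.1 k.2).1
    have hql : q (π' k'.1) := pivCol_mem_q hm' k'.2
    have := collapse hm hG hH hp hq hpk hql
    rw [hΦdef]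
    simp only [Matrix.of_apply, Matrix.mul_apply]
    rw [hrel, this, ← Finset.sum_coe_sort K]
    rfl
  have hdiag : Φ = Matrix.diagonal (fun k : ↥K' => m' k.1 (π' k.1)) := by
    ext k k'
    rcases eq_or_ne k k' with rfl | hne
    · simp [hΦdef]
    · have : m' k.1 (π' k'.1) = 0 := by
        by_contra hc
        have h2 : m' k'.1 (π' k'.1) ≠ 0 := by
          obtain ⟨-, l, -, hne2⟩ := mem_Krows.1 k'.2
          exact pivCol_spec ⟨l, hne2⟩
        exact hne (Subtype.ext (hm'.2 _ _ _ hc h2))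
      simp [hΦdef, Matrix.diagonal_apply_ne _ hne, this]
  have hunit : IsUnit Φ := by
    rw [Matrix.isUnit_iff_isUnit_det, hdiag, Matrix.det_diagonal]
    apply Ne.isUnit
    rw [Finset.prod_ne_zero_iff]
    intro k _
    obtain ⟨-, l, -, hne2⟩ := mem_Krows.1 k.2
    exact pivCol_spec ⟨l, hne2⟩
  have h1 : Φ.rank = Fintype.card ↥K' := Matrix.rank_of_isUnit Φ hunit
  have h2 : Φ.rank ≤ Fintype.card ↥K := by
    rw [hfact]
    exact le_trans (Matrix.rank_mul_le_left X Y) (Matrix.rank_le_card_width X)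
  rw [h1] at h2
  simpa [Fintype.card_coe] using h2

theorem prod_Krows_eq {G m m' H : Matrix I I F} (hm : Mono m)
    (hG : IsUni G) (hH : IsUni H) (hrel : m' = G * m * H)
    (hpos : ∀ i j : I, m' i j ≠ 0 → m i j ≠ 0)
    {p q : I → Prop} (hp : ∀ a b, p a → a ≤ b → p b) (hq : ∀ a b, q a → b ≤ a → q b) :
    ∏ k ∈ Krows m p q, m' k (pivCol m k) = ∏ k ∈ Krows m p q, m k (pivCol m k) := by
  classical
  set K := Krows m p q with hK
  set π := pivCol m
  have hpivne : ∀ k : ↥K, m k.1 (π k.1) ≠ 0 := by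
    intro k
    obtain ⟨-, l, -, hne⟩ := mem_Krows.1 k.2
    exact pivCol_spec ⟨l, hne⟩
  set A : Matrix ↥K ↥K F := Matrix.of fun k k' => G k.1 k'.1 with hA
  set D : Matrix ↥K ↥K F := Matrix.diagonal (fun k : ↥K => m k.1 (π k.1)) with hD
  set C : Matrix ↥K ↥K F := Matrix.of fun k k' => H (π k.1) (π k'.1) with hC
  set M' : Matrix ↥K ↥K F := Matrix.of fun k k' => m' k.1 (π k'.1) with hM'
  have hπinj : Function.Injective (fun k : ↥K => π k.1) := by
    intro k k' hkk'
    have hkk2 : π k.1 = π k'.1 := hkk'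
    have h1 : m k.1 (π k'.1) ≠ 0 := by rw [← hkk2]; exact hpivne k
    exact Subtype.ext (hm.2 _ _ _ h1 (hpivne k'))
  have hfact : M' = A * D * C := by
    ext k k'
    have hpk : p k.1 := (mem_Krows.1 k.2).1
    have hql : q (π k'.1) := pivCol_mem_q hm k'.2
    have hcol := collapse hm hG hH hp hq hpk hql
    have hADC : ∀ x : ↥K, (A * D) k x = G k.1 x.1 * m x.1 (π x.1) := by
      intro x
      rw [hA, hD, Matrix.mul_diagonal]
      rfl
    rw [hM']
    simp only [Matrix.of_apply]
    rw [hrel, hcol, ← Finset.sum_coe_sort K, Matrix.mul_apply]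
    apply Finset.sum_congr rfl
    intro x _
    rw [hADC x]
    rfl
  have hdiag : M' = Matrix.diagonal (fun k : ↥K => m' k.1 (π k.1)) := by
    ext k k'
    rcases eq_or_ne k k' with rfl | hne
    · simp [hM']
    · have : m' k.1 (π k'.1) = 0 := by
        by_contra hc
        exact hne (Subtype.ext (hm.2 _ _ _ (hpos _ _ hc) (hpivne k')))
      simp [hM', Matrix.diagonal_apply_ne _ hne, this]
  have hdetA : A.det = 1 := by
    apply det_eq_one_of_triangular_inj A (fun k => k.1) Subtype.val_injective
    · intro x y hxy
      exact hG.ne (by simpa [hA] using hxy)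
    · intro x
      simp [hA, hG.1]
  have hdetC : C.det = 1 := by
    apply det_eq_one_of_triangular_inj C (fun k => π k.1) hπinj
    · intro x y hxy
      exact hH.ne (by simpa [hC] using hxy)
    · intro x
      simp [hC, hH.1]
  have hdets : M'.det = D.det := by
    rw [hfact, Matrix.det_mul, Matrix.det_mul, hdetA, hdetC, one_mul, mul_one]
  rw [hdiag, Matrix.det_diagonal, hD, Matrix.det_diagonal] at hdets
  rw [← Finset.prod_coe_sort K, ← Finset.prod_coe_sort K]
  exact hdets

open scoped Classical in
/-- counting pivot rows in nested corners detects whether row `i` has a pivot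
in the column set `q`. -/
theorem card_Krows_split (m : Matrix I I F) (i : I) (q : I → Prop) :
    (Krows m (fun k => i ≤ k) q).card =
      (Krows m (fun k => i < k) q).card +
        (if ∃ l, q l ∧ m i l ≠ 0 then 1 else 0) := by
  have hnot : i ∉ Krows m (fun k => i < k) q := by
    simp [mem_Krows]
  by_cases h : ∃ l, q l ∧ m i l ≠ 0
  · have : Krows m (fun k => i ≤ k) q = insert i (Krows m (fun k => i < k) q) := by
      ext k
      simp only [mem_Krows, Finset.mem_insert]
      constructor
      · rintro ⟨hik, hX⟩
        rcases eq_or_lt_of_le hik with rfl | hlt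
        · exact Or.inl rfl
        · exact Or.inr ⟨hlt, hX⟩
      · rintro (rfl | ⟨hlt, hX⟩)
        · exact ⟨le_refl _, h⟩
        · exact ⟨hlt.le, hX⟩
    rw [this, Finset.card_insert_of_notMem hnot, if_pos h]
  · have : Krows m (fun k => i ≤ k) q = Krows m (fun k => i < k) q := by
      ext k
      simp only [mem_Krows]
      constructor
      · rintro ⟨hik, hX⟩
        rcases eq_or_lt_of_le hik with rfl | hlt
        · exact absurd hX h
        · exact ⟨hlt, hX⟩
      · rintro ⟨hlt, hX⟩
        exact ⟨hlt.le, hX⟩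
    rw [this, if_neg h]
    omega

theorem mono_nonzero_iff {m : Matrix I I F} (hm : Mono m) (i j : I) :
    m i j ≠ 0 ↔ ((∃ l, l ≤ j ∧ m i l ≠ 0) ∧ ¬(∃ l, l < j ∧ m i l ≠ 0)) := by
  constructor
  · intro h
    refine ⟨⟨j, le_refl j, h⟩, ?_⟩
    rintro ⟨l, hlj, hl⟩
    exact absurd (hm.1 i l j hl h) (ne_of_lt hlj)
  · rintro ⟨⟨l, hlj, hl⟩, hno⟩
    rcases eq_or_lt_of_le hlj with rfl | hlt
    · exact hl
    · exact absurd ⟨l, hlt, hl⟩ hno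

theorem mono_unique {m m' G H : Matrix I I F} (hm : Mono m) (hm' : Mono m')
    (hG : IsUni G) (hH : IsUni H) (hrel : m' = G * m * H) : m' = m := by
  obtain ⟨G', hG'uni, hG'l, hG'r⟩ := hG.exists_inv
  obtain ⟨H', hH'uni, hH'l, hH'r⟩ := hH.exists_inv
  have hrel' : m = G' * m' * H' := by
    rw [hrel]
    simp only [← Matrix.mul_assoc]
    rw [hG'l, Matrix.one_mul, Matrix.mul_assoc, hH'r, Matrix.mul_one]
  have hcards : ∀ (p q : I → Prop), (∀ a b, p a → a ≤ b → p b) →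
      (∀ a b, q a → b ≤ a → q b) → (Krows m p q).card = (Krows m' p q).card := by
    intro p q hp hq
    exact le_antisymm (card_Krows_le hm' hm hG'uni hH'uni hrel' hp hq)
      (card_Krows_le hm hm' hG hH hrel hp hq)
  have hrowiff : ∀ (i : I) (q : I → Prop), (∀ a b, q a → b ≤ a → q b) →
      ((∃ l, q l ∧ m i l ≠ 0) ↔ (∃ l, q l ∧ m' i l ≠ 0)) := by
    intro i q hq
    have h1 := card_Krows_split m i q
    have h2 := card_Krows_split m' i q
    have he1 := hcards (fun k => i ≤ k) q (fun a b ha hab => le_trans ha hab) hq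
    have he2 := hcards (fun k => i < k) q (fun a b ha hab => lt_of_lt_of_le ha hab) hq
    by_cases hEm : ∃ l, q l ∧ m i l ≠ 0 <;> by_cases hEm' : ∃ l, q l ∧ m' i l ≠ 0 <;>
      simp only [hEm, hEm', if_true, if_false, iff_true, iff_false, if_pos, if_neg,
        not_false_iff] at * <;> omega
  have hposiff : ∀ i j : I, m i j ≠ 0 ↔ m' i j ≠ 0 := by
    intro i j
    rw [mono_nonzero_iff hm, mono_nonzero_iff hm']
    rw [show (∃ l, l ≤ j ∧ m i l ≠ 0) ↔ (∃ l, l ≤ j ∧ m' i l ≠ 0) from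
      hrowiff i (fun l => l ≤ j) (fun a b ha hab => le_trans hab ha)]
    rw [show (∃ l, l < j ∧ m i l ≠ 0) ↔ (∃ l, l < j ∧ m' i l ≠ 0) from
      hrowiff i (fun l => l < j) (fun a b ha hab => lt_of_le_of_lt hab ha)]
  have hpos : ∀ i j : I, m' i j ≠ 0 → m i j ≠ 0 := fun i j h => (hposiff i j).2 h
  ext i j
  by_cases hij : m i j = 0
  · have : m' i j = 0 := by
      by_contra hc
      exact (hposiff i j).2 hc hij
    rw [this, hij]
  · -- pivot position
    have hqle : ∀ a b : I, a ≤ j → b ≤ a → b ≤ j := fun a b ha hab => le_trans hab ha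
    have hple : ∀ a b : I, i ≤ a → a ≤ b → i ≤ b := fun a b ha hab => le_trans ha hab
    have hplt : ∀ a b : I, i < a → a ≤ b → i < b := fun a b ha hab => lt_of_lt_of_le ha hab
    have hprodle := prod_Krows_eq hm hG hH hrel hpos hple hqle
    have hprodlt := prod_Krows_eq hm hG hH hrel hpos hplt hqle
    have hnot : i ∉ Krows m (fun k => i < k) (fun l => l ≤ j) := by
      simp [mem_Krows]
    have hsplit : Krows m (fun k => i ≤ k) (fun l => l ≤ j) =
        insert i (Krows m (fun k => i < k) (fun l => l ≤ j)) := by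
      ext k
      simp only [mem_Krows, Finset.mem_insert]
      constructor
      · rintro ⟨hik, hX⟩
        rcases eq_or_lt_of_le hik with rfl | hlt
        · exact Or.inl rfl
        · exact Or.inr ⟨hlt, hX⟩
      · rintro (rfl | ⟨hlt, hX⟩)
        · exact ⟨le_refl _, j, le_refl _, hij⟩
        · exact ⟨hlt.le, hX⟩
    rw [hsplit, Finset.prod_insert hnot, Finset.prod_insert hnot, hprodlt] at hprodle
    have hne : (∏ k ∈ Krows m (fun k => i < k) (fun l => l ≤ j), m k (pivCol m k)) ≠ 0 := by
      rw [Finset.prod_ne_zero_iff]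
      intro k hk
      obtain ⟨-, l, -, hnel⟩ := mem_Krows.1 hk
      exact pivCol_spec ⟨l, hnel⟩
    have hval : m' i (pivCol m i) = m i (pivCol m i) := mul_right_cancel₀ hne hprodle
    rwa [pivCol_eq hm hij] at hval

def GoodOn (s : Finset I) (a : Matrix I I F) : Prop :=
  (∀ i ∈ s, ∀ j j' : I, a i j ≠ 0 → a i j' ≠ 0 → j = j') ∧
  (∀ i i' j : I, i ∈ s → i' ∈ s → a i j ≠ 0 → a i' j ≠ 0 → i = i')

theorem exists_mono_aux : ∀ (n : ℕ) (s : Finset I) (a : Matrix I I F), SU a →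
    (∀ i ∈ s, ∀ k, i ≤ k → k ∈ s) → GoodOn s a → sᶜ.card ≤ n →
    ∃ g h : Matrix I I F, IsUni g ∧ IsUni h ∧ Mono (g * a * h) := by
  classical
  intro n
  induction n with
  | zero =>
    intro s a ha _ hgood hcard
    have hs : s = Finset.univ := by
      have : sᶜ = ∅ := Finset.card_eq_zero.1 (Nat.le_zero.1 hcard)
      simpa [Finset.compl_eq_empty_iff] using this
    subst hs
    refine ⟨1, 1, isUni_one, isUni_one, ?_⟩
    rw [Matrix.one_mul, Matrix.mul_one]
    exact ⟨fun i j j' => hgood.1 i (Finset.mem_univ i) j j',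
      fun i i' j h1 h2 => hgood.2 i i' j (Finset.mem_univ i) (Finset.mem_univ i') h1 h2⟩
  | succ n ih =>
    intro s a ha hup hgood hcard
    by_cases hs : sᶜ = ∅
    · have hs' : s = Finset.univ := by simpa [Finset.compl_eq_empty_iff] using hs
      subst hs'
      refine ⟨1, 1, isUni_one, isUni_one, ?_⟩
      rw [Matrix.one_mul, Matrix.mul_one]
      exact ⟨fun i j j' => hgood.1 i (Finset.mem_univ i) j j',
        fun i i' j h1 h2 => hgood.2 i i' j (Finset.mem_univ i) (Finset.mem_univ i') h1 h2⟩
    · have hne : sᶜ.Nonempty := Finset.nonempty_of_ne_empty hs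
      set i := sᶜ.max' hne with hidef
      have hins : i ∉ s := by
        have := sᶜ.max'_mem hne
        simpa [Finset.mem_compl] using this
      have himax : ∀ k, k ∉ s → k ≤ i := fun k hk =>
        Finset.le_max' _ _ (Finset.mem_compl.2 hk)
      have hklt : ∀ k ∈ s, i < k := by
        intro k hk
        by_contra hc
        exact hins (hup k hk i (not_lt.1 hc))
      -- step 1 : clear row i at the pivot columns of rows in s
      set c : I → F := fun k =>
        if hk : k ∈ s ∧ ∃ l, a k l ≠ 0 then
          -(a i (Exists.choose hk.2)) / (a k (Exists.choose hk.2)) else 0 with hcdef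
      have hc0 : ∀ k, k ∉ s → c k = 0 := fun k hk => dif_neg (fun h => hk h.1)
      set E : Matrix I I F := Matrix.of fun x k => if x = i then c k else 0 with hEdef
      have hEsu : SU E := by
        intro x y hxy
        rw [hEdef]
        simp only [Matrix.of_apply]
        by_cases hx : x = i
        · subst hx
          rw [if_pos rfl]
        -- y is below or equal i since ¬ x < y ... need y ∉ s
          apply hc0
          intro hy
          exact hxy (hklt y hy)
        · rw [if_neg hx]
      set g1 : Matrix I I F := 1 + E with hg1def
      have hg1 : IsUni g1 := isUni_one_add_SU hEsu
      set a1 : Matrix I I F := g1 * a with ha1def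
      have ha1su : SU a1 := hg1.mul_SU ha
      have ha1entry : ∀ x j, a1 x j = a x j + (if x = i then ∑ k : I, c k * a k j else 0) := by
        intro x j
        rw [ha1def, hg1def, Matrix.add_mul, Matrix.one_mul, Matrix.add_apply]
        congr 1
        rw [Matrix.mul_apply]
        by_cases hx : x = i
        · subst hx
          rw [if_pos rfl]
          apply Finset.sum_congr rfl
          intro k _
          rw [hEdef]
          simp
        · rw [if_neg hx]
          apply Finset.sum_eq_zero
          intro k _
          rw [hEdef]
          simp [hx]
      have ha1rows : ∀ x, x ≠ i → ∀ j, a1 x j = a x j := by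
        intro x hx j
        rw [ha1entry, if_neg hx, add_zero]
      have key1 : ∀ j, (∃ k ∈ s, a k j ≠ 0) → a1 i j = 0 := by
        intro j hj
        obtain ⟨k0, hk0s, hk0⟩ := hj
        rw [ha1entry, if_pos rfl]
        have hsum : ∑ k : I, c k * a k j = c k0 * a k0 j := by
          apply Finset.sum_eq_single k0
          · intro k _ hk
            by_cases hks : k ∈ s
            · by_cases hkj : a k j = 0
              · rw [hkj, mul_zero]
              · exact absurd (hgood.2 k k0 j hks hk0s hkj hk0) hk
            · rw [hc0 k hks, zero_mul]
          · simp
        rw [hsum]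
        have hex : k0 ∈ s ∧ ∃ l, a k0 l ≠ 0 := ⟨hk0s, j, hk0⟩
        have hck0 : c k0 = -(a i j) / (a k0 j) := by
          rw [hcdef]
          simp only []
          rw [dif_pos hex]
          have hl : a k0 (Exists.choose hex.2) ≠ 0 := Exists.choose_spec hex.2
          have : Exists.choose hex.2 = j := hgood.1 k0 hk0s _ j hl hk0
          rw [this]
        rw [hck0, div_mul_cancel₀ _ hk0]
        ring
      have key2 : ∀ j, ¬(∃ k ∈ s, a k j ≠ 0) → a1 i j = a i j := by
        intro j hj
        push_neg at hj
        rw [ha1entry, if_pos rfl]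
        have : ∑ k : I, c k * a k j = 0 := by
          apply Finset.sum_eq_zero
          intro k _
          by_cases hks : k ∈ s
          · rw [hj k hks, mul_zero]
          · rw [hc0 k hks, zero_mul]
        rw [this, add_zero]
      have hgood1 : GoodOn s a1 := by
        constructor
        · intro x hx j j' h1 h2
          have hxne : x ≠ i := fun h => hins (h ▸ hx)
          rw [ha1rows x hxne] at h1 h2
          exact hgood.1 x hx j j' h1 h2
        · intro x x' j hx hx' h1 h2
          have hxne : x ≠ i := fun h => hins (h ▸ hx)
          have hxne' : x' ≠ i := fun h => hins (h ▸ hx')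
          rw [ha1rows x hxne] at h1
          rw [ha1rows x' hxne'] at h2
          exact hgood.2 x x' j hx hx' h1 h2
      have star : ∀ j k, k ∈ s → a1 k j ≠ 0 → a1 i j = 0 := by
        intro j k hks hkj
        have hkne : k ≠ i := fun h => hins (h ▸ hks)
        rw [ha1rows k hkne] at hkj
        exact key1 j ⟨k, hks, hkj⟩
      -- common facts for the recursion
      have hupd : ∀ x ∈ insert i s, ∀ k, x ≤ k → k ∈ insert i s := by
        intro x hx k hxk
        rcases Finset.mem_insert.1 hx with rfl | hxs
        · rcases eq_or_lt_of_le hxk with rfl | hlt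
          · exact Finset.mem_insert_self _ _
          · apply Finset.mem_insert_of_mem
            by_contra hks
            exact absurd (himax k hks) (not_le.2 hlt)
        · exact Finset.mem_insert_of_mem (hup x hxs k hxk)
      have hcard' : (insert i s)ᶜ.card ≤ n := by
        rw [Finset.compl_insert, Finset.card_erase_of_mem (Finset.mem_compl.2 hins)]
        omega
      by_cases hrow : ∀ l, a1 i l = 0
      · -- row i is zero : just recurse
        have hgood' : GoodOn (insert i s) a1 := by
          constructor
          · intro x hx j j' h1 h2
            rcases Finset.mem_insert.1 hx with rfl | hxs
            · exact absurd (hrow j) h1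
            · exact hgood1.1 x hxs j j' h1 h2
          · intro x x' j hx hx' h1 h2
            rcases Finset.mem_insert.1 hx with rfl | hxs
            · exact absurd (hrow j) h1
            rcases Finset.mem_insert.1 hx' with rfl | hxs'
            · exact absurd (hrow j) h2
            · exact hgood1.2 x x' j hxs hxs' h1 h2
        obtain ⟨g, h, hg, hh, hmono⟩ := ih (insert i s) a1 ha1su hupd hgood' hcard'
        refine ⟨g * g1, h, hg.mul hg1, hh, ?_⟩
        have : g * g1 * a * h = g * a1 * h := by
          rw [ha1def, ← Matrix.mul_assoc]
        rwa [this]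
      · push_neg at hrow
        obtain ⟨l1, hl1⟩ := hrow
        set T : Finset I := Finset.univ.filter (fun l => a1 i l ≠ 0) with hTdef
        have hTne : T.Nonempty := ⟨l1, by simp [hTdef, hl1]⟩
        set l0 := T.min' hTne with hl0def
        have hl0 : a1 i l0 ≠ 0 := by
          have := T.min'_mem hTne
          simp only [hTdef, Finset.mem_filter] at this
          exact this.2
        have hl0min : ∀ l, a1 i l ≠ 0 → l0 ≤ l := by
          intro l hl
          exact T.min'_le l (by simp [hTdef, hl])
        set d : I → F := fun l => if l = l0 then 0 else -(a1 i l) / (a1 i l0) with hddef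
        set Fm : Matrix I I F := Matrix.of fun l' l => if l' = l0 then d l else 0 with hFdef
        have hFsu : SU Fm := by
          intro x y hxy
          rw [hFdef]
          simp only [Matrix.of_apply]
          by_cases hx : x = l0
          · subst hx
            rw [if_pos rfl, hddef]
            simp only []
            by_cases hy : y = l0
            · rw [if_pos hy]
            · rw [if_neg hy]
              have : a1 i y = 0 := by
                by_contra hc
                exact hxy (lt_of_le_of_ne (hl0min y hc) (Ne.symm hy))
              rw [this]
              simp
          · rw [if_neg hx]
        set h2 : Matrix I I F := 1 + Fm with hh2def
        have hh2 : IsUni h2 := isUni_one_add_SU hFsu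
        set a2 : Matrix I I F := a1 * h2 with ha2def
        have ha2su : SU a2 := ha1su.mul_uni hh2
        have ha2entry : ∀ k l, a2 k l = a1 k l + a1 k l0 * d l := by
          intro k l
          rw [ha2def, hh2def, Matrix.mul_add, Matrix.mul_one, Matrix.add_apply]
          congr 1
          rw [Matrix.mul_apply]
          rw [Finset.sum_eq_single l0]
          · rw [hFdef]; simp
          · intro x _ hx
            rw [hFdef]
            simp [hx]
          · simp
        have hd0 : d l0 = 0 := by rw [hddef]; simp
        have hrowsB : ∀ k, a1 k l0 = 0 → ∀ l, a2 k l = a1 k l := by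
          intro k hk l
          rw [ha2entry, hk, zero_mul, add_zero]
        have hsl0 : ∀ k ∈ s, a1 k l0 = 0 := by
          intro k hk
          by_contra hc
          exact hl0 (star l0 k hk hc)
        have ha2il0 : a2 i l0 = a1 i l0 := by rw [ha2entry, hd0, mul_zero, add_zero]
        have ha2i : ∀ l, l ≠ l0 → a2 i l = 0 := by
          intro l hl
          rw [ha2entry, hddef]
          simp only []
          rw [if_neg hl]
          rw [mul_comm, div_mul_cancel₀ _ hl0]
          ring
        have hgood2 : GoodOn (insert i s) a2 := by
          constructor
          · intro x hx j j' h1 h2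
            rcases Finset.mem_insert.1 hx with rfl | hxs
            · by_cases hj : j = l0
              · by_cases hj' : j' = l0
                · rw [hj, hj']
                · exact absurd (ha2i j' hj') h2
              · exact absurd (ha2i j hj) h1
            · have hxne : x ≠ i := fun h => hins (h ▸ hxs)
              rw [hrowsB x (hsl0 x hxs)] at h1 h2
              rw [ha1rows x hxne] at h1 h2
              exact hgood.1 x hxs j j' h1 h2
          · intro x x' j hx hx' h1 h2
            rcases Finset.mem_insert.1 hx with rfl | hxs <;>
              rcases Finset.mem_insert.1 hx' with rfl | hxs'
            · rfl
            · -- x = i, x' ∈ s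
              have hj : j = l0 := by
                by_contra hj
                exact absurd (ha2i j hj) h1
              subst hj
              rw [hrowsB x' (hsl0 x' hxs')] at h2
              exact absurd (hsl0 x' hxs') h2
            · have hj : j = l0 := by
                by_contra hj
                exact absurd (ha2i j hj) h2
              subst hj
              rw [hrowsB x (hsl0 x hxs)] at h1
              exact absurd (hsl0 x hxs) h1
            · rw [hrowsB x (hsl0 x hxs)] at h1
              rw [hrowsB x' (hsl0 x' hxs')] at h2
              have hxne : x ≠ i := fun h => hins (h ▸ hxs)
              have hxne' : x' ≠ i := fun h => hins (h ▸ hxs')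
              rw [ha1rows x hxne] at h1
              rw [ha1rows x' hxne'] at h2
              exact hgood.2 x x' j hxs hxs' h1 h2
        obtain ⟨g, h, hg, hh, hmono⟩ := ih (insert i s) a2 ha2su hupd hgood2 hcard'
        refine ⟨g * g1, h2 * h, hg.mul hg1, hh2.mul hh, ?_⟩
        have : g * g1 * a * (h2 * h) = g * a2 * h := by
          rw [ha2def, ha1def]
          simp only [Matrix.mul_assoc]
        rwa [this]

theorem exists_mono (a : Matrix I I F) (ha : SU a) :
    ∃ g h : Matrix I I F, IsUni g ∧ IsUni h ∧ Mono (g * a * h) := by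
  classical
  refine exists_mono_aux ((∅ : Finset I)ᶜ).card ∅ a ha ?_ ?_ le_rfl
  · intro i hi
    simp at hi
  · constructor
    · intro i hi
      simp at hi
    · intro i i' j hi
      simp at hi

theorem superclass_canonical_representative' {U : Matrix I I F} (hU : IsUni U) :
    ∃! V : Matrix I I F, IsUni V ∧ matScRel U V ∧
      (∀ i j j' : I, (V - 1) i j ≠ 0 → (V - 1) i j' ≠ 0 → j = j') ∧
      (∀ i i' j : I, (V - 1) i j ≠ 0 → (V - 1) i' j ≠ 0 → i = i') := by
  have ha : SU (U - 1) := isUni_iff_SU_sub_one.1 hU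
  obtain ⟨g, h, hg, hh, hmono⟩ := exists_mono (U - 1) ha
  have hbsu : SU (g * (U - 1) * h) := (hg.mul_SU ha).mul_uni hh
  refine ⟨g * (U - 1) * h + 1, ⟨?_, ⟨g, h, hg, hh, by rw [add_sub_cancel_right]⟩, ?_, ?_⟩, ?_⟩
  · rw [isUni_iff_SU_sub_one, add_sub_cancel_right]
    exact hbsu
  · rw [add_sub_cancel_right]
    exact hmono.1
  · rw [add_sub_cancel_right]
    exact hmono.2
  · rintro V ⟨hVuni, ⟨g', h', hg', hh', hrel⟩, hrow, hcol⟩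
    have hb'mono : Mono (V - 1) := ⟨hrow, hcol⟩
    obtain ⟨gi, hgiu, hgil, hgir⟩ := hg'.exists_inv
    obtain ⟨hi, hhiu, hhil, hhir⟩ := hh'.exists_inv
    have ha' : U - 1 = gi * (V - 1) * hi := by
      rw [hrel]
      simp only [← Matrix.mul_assoc]
      rw [hgil, Matrix.one_mul, Matrix.mul_assoc, hhir, Matrix.mul_one]
    have hbb : g * (U - 1) * h = (g * gi) * (V - 1) * (hi * h) := by
      rw [ha']
      simp only [Matrix.mul_assoc]
    have := mono_unique hb'mono hmono (hg.mul hgiu) (hhiu.mul hh) hbb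
    have hv : V - 1 + 1 = V := by abel
    rw [← hv, ← this]

end Dev

/-- Every superclass of `U(I,ℓ)` over a finite field contains a unique matrix `V`
such that `V - Id` has at most one nonzero entry in each row and in each column. -/
theorem superclass_canonical_representative {I F : Type*}
    [Fintype I] [LinearOrder I] [Field F] [Fintype F]
    (U : Matrix I I F) (hU : IsUni U) :
    ∃! V : Matrix I I F, IsUni V ∧ matScRel U V ∧
      (∀ i j j' : I, (V - 1) i j ≠ 0 → (V - 1) i j' ≠ 0 → j = j') ∧
      (∀ i i' j : I, (V - 1) i j ≠ 0 → (V - 1) i' j ≠ 0 → i = i') :=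
  superclass_canonical_representative' hU
end

section
/- The superclasses of U(I,ℓ) are in bijection with arc diagrams on (I,ℓ): pairs (X,α) where X is a set partition of I and α : A(X,ℓ) → F^× assigns a nonzero field element to each arc of X with respect to ℓ. -/
/-- `(i,j)` is an arc of the set partition `X` (a setoid) with respect to the
linear order on `I`: `i < j`, `i` and `j` lie in the same block, and no other
element of that block lies strictly between them. -/
def IsArc {I : Type*} [LinearOrder I] (X : Setoid I) (i j : I) : Prop :=
  i < j ∧ X.r i j ∧ ∀ k : I, X.r i k → ¬(i < k ∧ k < j)

open Classical in
/-- The canonical representative `U_{X,α}` of the superclass indexed by the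
arc diagram `(X, α)`: entries `α i j` at the arcs, `1` on the diagonal, `0` elsewhere. -/
noncomputable def arcMat {I F : Type*} [LinearOrder I] [Zero F] [One F]
    (X : Setoid I) (α : I → I → F) : Matrix I I F :=
  Matrix.of fun i j => if i = j then 1 else if IsArc X i j then α i j else 0

namespace ArcProof
open Relation

/-- strictly upper triangular -/
def SU {I F : Type*} [LinearOrder I] [Zero F] (N : Matrix I I F) : Prop :=
  ∀ i j : I, j ≤ i → N i j = 0

variable {I F : Type*} [Fintype I] [LinearOrder I] [Field F]

attribute [local instance] Fintype.toLocallyFiniteOrder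

set_option linter.unusedSectionVars false

lemma su_lt {N : Matrix I I F} (hN : SU N) {i j : I} (h : N i j ≠ 0) : i < j := by
  by_contra hc
  exact h (hN i j (not_lt.1 hc))

lemma isUni_one : IsUni (1 : Matrix I I F) :=
  ⟨fun i => Matrix.one_apply_eq i, fun _ _ h => Matrix.one_apply_ne (ne_of_gt h)⟩

lemma uni_mul_su {g N : Matrix I I F} (hg : IsUni g) (hN : SU N) : SU (g * N) := by
  intro i j hji
  rw [Matrix.mul_apply]
  refine Finset.sum_eq_zero fun k _ => ?_
  rcases lt_or_ge k i with hk | hk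
  · rw [hg.2 i k hk, zero_mul]
  · rw [hN k j (hji.trans hk), mul_zero]

lemma su_mul_uni {N h : Matrix I I F} (hN : SU N) (hh : IsUni h) : SU (N * h) := by
  intro i j hji
  rw [Matrix.mul_apply]
  refine Finset.sum_eq_zero fun k _ => ?_
  rcases le_or_gt k j with hk | hk
  · rw [hN i k (hk.trans hji), zero_mul]
  · rw [hh.2 k j hk, mul_zero]

lemma su_mul_su {a b : Matrix I I F} (ha : SU a) (hb : SU b) : SU (a * b) := by
  intro i j hji
  rw [Matrix.mul_apply]
  refine Finset.sum_eq_zero fun k _ => ?_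
  rcases le_or_gt k i with hk | hk
  · rw [ha i k hk, zero_mul]
  · rw [hb k j ((hji.trans hk.le)), mul_zero]

lemma uni_mul {g h : Matrix I I F} (hg : IsUni g) (hh : IsUni h) : IsUni (g * h) := by
  constructor
  · intro i
    rw [Matrix.mul_apply]
    rw [Finset.sum_eq_single i]
    · rw [hg.1, hh.1, one_mul]
    · intro k _ hk
      rcases lt_or_gt_of_ne hk with h1 | h1
      · rw [hg.2 i k h1, zero_mul]
      · rw [hh.2 k i h1, mul_zero]
    · exact fun habs => absurd (Finset.mem_univ i) habs
  · intro i j hji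
    rw [Matrix.mul_apply]
    refine Finset.sum_eq_zero fun k _ => ?_
    rcases lt_or_ge k i with hk | hk
    · rw [hg.2 i k hk, zero_mul]
    · rw [hh.2 k j (lt_of_lt_of_le hji hk), mul_zero]

lemma uni_sub_one_su {U : Matrix I I F} (hU : IsUni U) : SU (U - 1) := by
  intro i j hji
  rcases eq_or_lt_of_le hji with h | h
  · subst h
    rw [Matrix.sub_apply, hU.1, Matrix.one_apply_eq, sub_self]
  · rw [Matrix.sub_apply, hU.2 i j h, Matrix.one_apply_ne (ne_of_gt h), sub_zero]

lemma su_pow {s : Matrix I I F} (hs : SU s) : ∀ k, SU (s ^ (k + 1)) := by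
  intro k
  induction k with
  | zero => simpa using hs
  | succ n ih => rw [pow_succ]; exact su_mul_su ih hs

lemma su_entry_pow {s : Matrix I I F} (hs : SU s) :
    ∀ (m : ℕ) (i j : I), (s ^ m) i j ≠ 0 → i ≤ j ∧ m ≤ (Finset.Ioc i j).card := by
  intro m
  induction m with
  | zero =>
    intro i j h
    rw [pow_zero] at h
    have hij : i = j := by
      by_contra hc
      exact h (Matrix.one_apply_ne hc)
    exact ⟨le_of_eq hij, Nat.zero_le _⟩
  | succ n ih =>
    intro i j h
    rw [pow_succ', Matrix.mul_apply] at h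
    obtain ⟨k, _, hk⟩ := Finset.exists_ne_zero_of_sum_ne_zero h
    have h1 : s i k ≠ 0 := fun e => hk (by rw [e, zero_mul])
    have h2 : (s ^ n) k j ≠ 0 := fun e => hk (by rw [e, mul_zero])
    have hik : i < k := su_lt hs h1
    obtain ⟨hkj, hcard⟩ := ih k j h2
    refine ⟨hik.le.trans hkj, ?_⟩
    have hsub : insert k (Finset.Ioc k j) ⊆ Finset.Ioc i j := by
      intro x hx
      rcases Finset.mem_insert.1 hx with rfl | hx
      · exact Finset.mem_Ioc.2 ⟨hik, hkj⟩
      · have := Finset.mem_Ioc.1 hx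
        exact Finset.mem_Ioc.2 ⟨hik.trans this.1, this.2⟩
    have hcardins : (insert k (Finset.Ioc k j)).card = (Finset.Ioc k j).card + 1 :=
      Finset.card_insert_of_notMem (by simp)
    have := Finset.card_le_card hsub
    omega

lemma su_pow_card {s : Matrix I I F} (hs : SU s) : s ^ (Fintype.card I) = 0 := by
  ext i j
  rw [Matrix.zero_apply]
  by_contra h
  obtain ⟨hij, hc⟩ := su_entry_pow hs (Fintype.card I) i j h
  have hsub : Finset.Ioc i j ⊆ Finset.univ.erase i := by
    intro x hx
    exact Finset.mem_erase.2 ⟨(ne_of_gt (Finset.mem_Ioc.1 hx).1), Finset.mem_univ x⟩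
  have h2 := Finset.card_le_card hsub
  rw [Finset.card_erase_of_mem (Finset.mem_univ i), Finset.card_univ] at h2
  have h3 : 0 < Fintype.card I := Fintype.card_pos_iff.2 ⟨i⟩
  omega

lemma uni_inv {g : Matrix I I F} (hg : IsUni g) :
    ∃ g', IsUni g' ∧ g * g' = 1 ∧ g' * g = 1 := by
  classical
  set u : Matrix I I F := 1 - g with hu
  have hsu : SU u := by
    intro i j hji
    rcases eq_or_lt_of_le hji with h | h
    · subst h
      rw [hu, Matrix.sub_apply, hg.1, Matrix.one_apply_eq, sub_self]
    · rw [hu, Matrix.sub_apply, hg.2 i j h, Matrix.one_apply_ne (ne_of_gt h), sub_zero]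
  set n := Fintype.card I with hn
  set g' := ∑ k ∈ Finset.range n, u ^ k with hg'
  have key : g' * g = 1 := by
    have h1 : g' * (u - 1) = u ^ n - 1 := geom_sum_mul u n
    have h2 : u ^ n = 0 := su_pow_card hsu
    have h3 : u - 1 = -g := by rw [hu]; abel
    rw [h3, h2, zero_sub, mul_neg] at h1
    exact neg_injective h1
  have key2 : g * g' = 1 := mul_eq_one_comm.mp key
  refine ⟨g', ⟨?_, ?_⟩, key2, key⟩
  · intro i
    rw [hg', Matrix.sum_apply]
    rw [Finset.sum_eq_single 0]
    · rw [pow_zero]; exact Matrix.one_apply_eq i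
    · intro k _ hk0
      obtain ⟨m, rfl⟩ := Nat.exists_eq_succ_of_ne_zero hk0
      exact su_pow hsu m i i le_rfl
    · intro h0
      have : 0 < n := Fintype.card_pos_iff.2 ⟨i⟩
      exact absurd (Finset.mem_range.2 this) h0
  · intro i j hji
    rw [hg', Matrix.sum_apply]
    refine Finset.sum_eq_zero fun k _ => ?_
    cases k with
    | zero => rw [pow_zero]; exact Matrix.one_apply_ne (ne_of_gt hji)
    | succ m => exact su_pow hsu m i j hji.le

def IsRook (R : Matrix I I F) : Prop :=
  SU R ∧ (∀ i j j' : I, R i j ≠ 0 → R i j' ≠ 0 → j = j') ∧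
    (∀ i i' j : I, R i j ≠ 0 → R i' j ≠ 0 → i = i')

def Clean (N : Matrix I I F) (r : I) : Prop :=
  ∃ c, N r c ≠ 0 ∧ (∀ j, N r j ≠ 0 → j = c) ∧ (∀ k, N k c ≠ 0 → k = r)

def Bad (N : Matrix I I F) (r : I) : Prop := (∃ j, N r j ≠ 0) ∧ ¬ Clean N r

lemma rook_of_not_bad {N : Matrix I I F} (hN : SU N) (h : ∀ r, ¬ Bad N r) : IsRook N := by
  have hcl : ∀ i j, N i j ≠ 0 → Clean N i := by
    intro i j hij
    by_contra hc
    exact h i ⟨⟨j, hij⟩, hc⟩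
  refine ⟨hN, ?_, ?_⟩
  · intro i j j' h1 h2
    obtain ⟨c, _, hrow, _⟩ := hcl i j h1
    rw [hrow j h1, hrow j' h2]
  · intro i i' j h1 h2
    obtain ⟨c, _, hrow, hcol⟩ := hcl i j h1
    have hjc : j = c := hrow j h1
    subst hjc
    exact (hcol i' h2).symm

lemma reduce : ∀ (n : ℕ) (N : Matrix I I F), SU N →
    (∀ r, Bad N r → (Finset.univ.filter (fun x => x ≤ r)).card ≤ n) →
    ∃ g h, IsUni g ∧ IsUni h ∧ IsRook (g * N * h) := by
  classical
  intro n
  induction n with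
  | zero =>
    intro N hN hb
    have hnb : ∀ r, ¬ Bad N r := by
      intro r hr
      have h1 := hb r hr
      have h2 : 0 < (Finset.univ.filter (fun x => x ≤ r)).card := Finset.card_pos.2 ⟨r, by simp⟩
      omega
    exact ⟨1, 1, isUni_one, isUni_one, by
      rw [Matrix.one_mul, Matrix.mul_one]; exact rook_of_not_bad hN hnb⟩
  | succ n ih =>
    intro N hN hb
    by_cases hall : ∀ r, ¬ Bad N r
    · exact ⟨1, 1, isUni_one, isUni_one, by
        rw [Matrix.one_mul, Matrix.mul_one]; exact rook_of_not_bad hN hall⟩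
    · push_neg at hall
      obtain ⟨r0, hr0⟩ := hall
      set B := Finset.univ.filter (fun r => Bad N r) with hB
      have hBne : B.Nonempty := ⟨r0, by simp [hB, hr0]⟩
      set r := B.max' hBne with hrdef
      have hrbad : Bad N r := by
        have := B.max'_mem hBne
        simp [hB] at this
        exact this
      have hrmax : ∀ k, Bad N k → k ≤ r := fun k hk => B.le_max' k (by simp [hB, hk])
      set C := Finset.univ.filter (fun j => N r j ≠ 0) with hC
      have hCne : C.Nonempty := by
        obtain ⟨j, hj⟩ := hrbad.1
        exact ⟨j, by simp [hC, hj]⟩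
      set c := C.min' hCne with hcdef
      have hrc : N r c ≠ 0 := by
        have := C.min'_mem hCne
        simp [hC] at this
        exact this
      have hcmin : ∀ j, N r j ≠ 0 → c ≤ j := fun j hj => C.min'_le j (by simp [hC, hj])
      have hrltc : r < c := su_lt hN hrc
      have hbelow : ∀ k, r < k → N k c = 0 := by
        intro k hk
        by_contra hkc
        have hnb : ¬ Bad N k := fun hbk => absurd (hrmax k hbk) (not_le.2 hk)
        have hclk : Clean N k := by
          by_contra hcc
          exact hnb ⟨⟨c, hkc⟩, hcc⟩
        obtain ⟨ck, _, hrow, hcol⟩ := hclk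
        have hcc : c = ck := hrow c hkc
        have : N r ck ≠ 0 := by rw [← hcc]; exact hrc
        exact absurd (hcol r this) (ne_of_lt hk)
      -- elementary row operations clearing column c above r
      set w : Matrix I I F :=
        Matrix.of (fun k l => if k < r ∧ l = r then -(N k c / N r c) else 0) with hw
      set g1 : Matrix I I F := 1 + w with hg1def
      have hg1 : IsUni g1 := by
        constructor
        · intro i
          rw [hg1def, Matrix.add_apply, Matrix.one_apply_eq, hw, Matrix.of_apply,
            if_neg (by rintro ⟨h1, rfl⟩; exact lt_irrefl _ h1), add_zero]
        · intro i j hji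
          rw [hg1def, Matrix.add_apply, Matrix.one_apply_ne (ne_of_gt hji), hw, Matrix.of_apply,
            if_neg (by rintro ⟨h1, rfl⟩; exact absurd (hji.trans h1) (lt_irrefl _)), add_zero]
      set N1 := g1 * N with hN1def
      have hN1 : ∀ k j, N1 k j = N k j + (if k < r then -(N k c / N r c) * N r j else 0) := by
        intro k j
        rw [hN1def, hg1def, Matrix.add_mul, Matrix.one_mul, Matrix.add_apply]
        congr 1
        rw [Matrix.mul_apply, Finset.sum_eq_single r]
        · by_cases hk : k < r
          · rw [hw, Matrix.of_apply, if_pos ⟨hk, rfl⟩, if_pos hk]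
          · rw [hw, Matrix.of_apply, if_neg (by rintro ⟨h1, -⟩; exact hk h1), if_neg hk, zero_mul]
        · intro l _ hl
          rw [hw, Matrix.of_apply, if_neg (by rintro ⟨-, h2⟩; exact hl h2), zero_mul]
        · exact fun habs => absurd (Finset.mem_univ r) habs
      have hN1c : ∀ k, N1 k c = if k = r then N r c else 0 := by
        intro k
        rw [hN1]
        rcases lt_trichotomy k r with h | h | h
        · rw [if_pos h, if_neg (ne_of_lt h), neg_mul, div_mul_cancel₀ _ hrc, add_neg_cancel]
        · subst h
          rw [if_neg (lt_irrefl _), if_pos rfl, add_zero]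
        · rw [if_neg (not_lt.2 h.le), if_neg (ne_of_gt h), add_zero]
          exact hbelow k h
      have hN1r : ∀ j, N1 r j = N r j := by
        intro j
        rw [hN1, if_neg (lt_irrefl _), add_zero]
      have hN1gt : ∀ k j, r < k → N1 k j = N k j := by
        intro k j hk
        rw [hN1, if_neg (not_lt.2 hk.le), add_zero]
      -- column operations clearing row r to the right of c
      set v : Matrix I I F :=
        Matrix.of (fun l m => if l = c ∧ c < m then -(N r m / N r c) else 0) with hv
      set h1 : Matrix I I F := 1 + v with hh1def
      have hh1 : IsUni h1 := by
        constructor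
        · intro i
          rw [hh1def, Matrix.add_apply, Matrix.one_apply_eq, hv, Matrix.of_apply,
            if_neg (by rintro ⟨rfl, h1⟩; exact lt_irrefl _ h1), add_zero]
        · intro i j hji
          rw [hh1def, Matrix.add_apply, Matrix.one_apply_ne (ne_of_gt hji), hv, Matrix.of_apply,
            if_neg (by rintro ⟨rfl, h2⟩; exact absurd (hji.trans h2) (lt_irrefl _)), add_zero]
      set N2 := N1 * h1 with hN2def
      have hN2 : ∀ k m, N2 k m = N1 k m + (if k = r ∧ c < m then -(N r m) else 0) := by
        intro k m
        rw [hN2def, hh1def, Matrix.mul_add, Matrix.mul_one, Matrix.add_apply]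
        congr 1
        rw [Matrix.mul_apply, Finset.sum_eq_single c]
        · rw [hN1c]
          by_cases hk : k = r
          · subst hk
            rw [if_pos rfl, hv, Matrix.of_apply]
            by_cases hm : c < m
            · rw [if_pos ⟨rfl, hm⟩, if_pos ⟨rfl, hm⟩, mul_neg, mul_div_cancel₀ _ hrc]
            · rw [if_neg (by rintro ⟨-, h2⟩; exact hm h2), if_neg (by rintro ⟨-, h2⟩; exact hm h2),
                mul_zero]
          · rw [if_neg hk, if_neg (by rintro ⟨h1, -⟩; exact hk h1), zero_mul]
        · intro l _ hl
          rw [hv, Matrix.of_apply, if_neg (by rintro ⟨h1, -⟩; exact hl h1), mul_zero]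
        · exact fun habs => absurd (Finset.mem_univ c) habs
      have hN2gt : ∀ k m, r < k → N2 k m = N k m := by
        intro k m hk
        rw [hN2, if_neg (by rintro ⟨rfl, -⟩; exact lt_irrefl _ hk), add_zero, hN1gt k m hk]
      have hN2r : ∀ m, N2 r m = if m = c then N r c else 0 := by
        intro m
        rw [hN2, hN1r]
        rcases lt_trichotomy m c with h | h | h
        · rw [if_neg (by rintro ⟨-, h2⟩; exact absurd (h.trans h2) (lt_irrefl _)), add_zero,
            if_neg (ne_of_lt h)]
          by_contra hne
          exact absurd (hcmin m hne) (not_le.2 h)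
        · subst h
          rw [if_neg (by rintro ⟨-, h2⟩; exact lt_irrefl _ h2), add_zero, if_pos rfl]
        · rw [if_pos ⟨rfl, h⟩, if_neg (ne_of_gt h), add_neg_cancel]
      have hN2c : ∀ k, N2 k c = if k = r then N r c else 0 := by
        intro k
        rw [hN2, if_neg (by rintro ⟨-, h2⟩; exact lt_irrefl _ h2), add_zero, hN1c]
      have hN2lt : ∀ k m, k < r → N2 k m = N k m + -(N k c / N r c) * N r m := by
        intro k m hk
        rw [hN2, if_neg (by rintro ⟨rfl, -⟩; exact lt_irrefl _ hk), add_zero, hN1, if_pos hk]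
      have hSU2 : SU N2 := su_mul_uni (uni_mul_su hg1 hN) hh1
      -- all rows ≥ r are not bad in N2
      have hclean2 : ∀ k, r ≤ k → ¬ Bad N2 k := by
        intro k hk hbad
        rcases eq_or_lt_of_le hk with rfl | hlt
        · refine hbad.2 ⟨c, ?_, ?_, ?_⟩
          · rw [hN2r, if_pos rfl]; exact hrc
          · intro j hj
            by_contra hne
            rw [hN2r, if_neg hne] at hj
            exact hj rfl
          · intro m hm
            by_contra hne
            rw [hN2c, if_neg hne] at hm
            exact hm rfl
        · by_cases hz : ∃ j, N k j ≠ 0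
          · have hnbk : ¬ Bad N k := fun hh => absurd (hrmax k hh) (not_le.2 hlt)
            have hclk : Clean N k := by
              by_contra hcc
              exact hnbk ⟨hz, hcc⟩
            obtain ⟨ck, hck, hrow, hcol⟩ := hclk
            refine hbad.2 ⟨ck, ?_, ?_, ?_⟩
            · rw [hN2gt k ck hlt]; exact hck
            · intro j hj
              rw [hN2gt k j hlt] at hj
              exact hrow j hj
            · intro m hm
              rcases lt_trichotomy m r with h | h | h
              · rw [hN2lt m ck h] at hm
                have e1 : N m ck = 0 := by
                  by_contra hne
                  exact absurd (hcol m hne) (ne_of_lt (h.trans hlt))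
                have e2 : N r ck = 0 := by
                  by_contra hne
                  exact absurd (hcol r hne) (ne_of_lt hlt)
                rw [e1, e2, mul_zero, add_zero] at hm
                exact absurd rfl hm
              · subst h
                rw [hN2r] at hm
                have : ck ≠ c := by
                  intro he
                  rw [he] at hck
                  exact hck (hbelow k hlt)
                rw [if_neg this] at hm
                exact absurd rfl hm
              · rw [hN2gt m ck h] at hm
                exact hcol m hm
          · push_neg at hz
            obtain ⟨j, hj⟩ := hbad.1
            rcases lt_trichotomy k r with h | h | h
            · exact absurd h (not_lt.2 hk)
            · exact absurd h (ne_of_gt hlt)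
            · rw [hN2gt k j h] at hj
              exact hj (hz j)
      have hb2 : ∀ k, Bad N2 k → (Finset.univ.filter (fun x => x ≤ k)).card ≤ n := by
        intro k hk
        have hkr : k < r := by
          by_contra hc2
          exact hclean2 k (not_lt.1 hc2) hk
        have hsub : Finset.univ.filter (fun x => x ≤ k) ⊂ Finset.univ.filter (fun x => x ≤ r) := by
          refine ⟨fun x hx => ?_, ?_⟩
          · simp only [Finset.mem_filter, Finset.mem_univ, true_and] at hx ⊢
            exact hx.trans hkr.le
          · intro hcon
            have := hcon (Finset.mem_filter.2 ⟨Finset.mem_univ r, le_refl r⟩)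
            simp only [Finset.mem_filter, Finset.mem_univ, true_and] at this
            exact absurd this (not_le.2 hkr)
        have h1 := Finset.card_lt_card hsub
        have h2 := hb r hrbad
        omega
      obtain ⟨g2, h2, hg2, hh2, hrook⟩ := ih N2 hSU2 hb2
      refine ⟨g2 * g1, h1 * h2, uni_mul hg2 hg1, uni_mul hh1 hh2, ?_⟩
      have : g2 * g1 * N * (h1 * h2) = g2 * N2 * h2 := by
        rw [hN2def, hN1def]
        simp only [Matrix.mul_assoc]
      rw [this]
      exact hrook

section Reach

variable {s : I → I → Prop}

lemma reach_le (hlt : ∀ i j, s i j → i < j) {i j : I}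
    (h : Relation.ReflTransGen s i j) : i ≤ j := by
  induction h with
  | refl => exact le_rfl
  | tail _ h2 ih => exact ih.trans (hlt _ _ h2).le

lemma reach_fwd (hfun : ∀ i j j', s i j → s i j' → j = j') {j i : I}
    (h1 : Relation.ReflTransGen s j i) :
    ∀ k, Relation.ReflTransGen s j k →
      Relation.ReflTransGen s i k ∨ Relation.ReflTransGen s k i := by
  induction h1 using Relation.ReflTransGen.head_induction_on with
  | refl => exact fun k hk => Or.inl hk
  | head hstep hrest ih =>
    rename_i a b
    intro k hk
    rcases Relation.ReflTransGen.cases_head hk with rfl | ⟨d, hd, hdk⟩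
    · exact Or.inr (hrest.head hstep)
    · have hbd : d = b := (hfun _ _ _ hstep hd).symm
      subst hbd
      exact ih k hdk

lemma reach_back (hinj : ∀ i i' j, s i j → s i' j → i = i') {i k j : I}
    (h1 : Relation.ReflTransGen s i j) (h2 : Relation.ReflTransGen s k j) :
    Relation.ReflTransGen s i k ∨ Relation.ReflTransGen s k i := by
  have h1' : Relation.ReflTransGen (Function.swap s) j i := Relation.reflTransGen_swap.2 h1
  have h2' : Relation.ReflTransGen (Function.swap s) j k := Relation.reflTransGen_swap.2 h2
  have hfun' : ∀ a b b', Function.swap s a b → Function.swap s a b' → b = b' :=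
    fun a b b' hb hb' => hinj _ _ _ hb hb'
  rcases reach_fwd hfun' h1' k h2' with h | h
  · exact Or.inr (Relation.reflTransGen_swap.1 h)
  · exact Or.inl (Relation.reflTransGen_swap.1 h)

lemma rtg_eqvGen {i j : I} (h : Relation.ReflTransGen s i j) : EqvGen s i j := by
  induction h with
  | refl => exact EqvGen.refl _
  | tail _ h2 ih => exact EqvGen.trans _ _ _ ih (EqvGen.rel _ _ h2)

lemma eqvGen_iff_reach (hfun : ∀ i j j', s i j → s i j' → j = j')
    (hinj : ∀ i i' j, s i j → s i' j → i = i') {i j : I} :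
    EqvGen s i j ↔ Relation.ReflTransGen s i j ∨ Relation.ReflTransGen s j i := by
  constructor
  · intro h
    induction h with
    | rel a b hab => exact Or.inl (Relation.ReflTransGen.single hab)
    | refl a => exact Or.inl Relation.ReflTransGen.refl
    | symm a b _ ih => exact ih.symm
    | trans a b c _ _ ih1 ih2 =>
      rcases ih1 with h1 | h1 <;> rcases ih2 with h2 | h2
      · exact Or.inl (h1.trans h2)
      · exact reach_back hinj h1 h2
      · exact reach_fwd hfun h1 c h2
      · exact Or.inr (h2.trans h1)
  · rintro (h | h)
    · exact rtg_eqvGen h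
    · exact EqvGen.symm _ _ (rtg_eqvGen h)

end Reach

lemma arc_iff_rook {R : Matrix I I F} (hR : IsRook R) {i j : I} :
    IsArc (EqvGen.setoid (fun a b => R a b ≠ 0)) i j ↔ R i j ≠ 0 := by
  set s : I → I → Prop := fun a b => R a b ≠ 0 with hs
  have hlt : ∀ a b, s a b → a < b := fun a b h => su_lt hR.1 h
  have hfun : ∀ a b b', s a b → s a b' → b = b' := fun a b b' h h' => hR.2.1 a b b' h h'
  have hinj : ∀ a a' b, s a b → s a' b → a = a' := fun a a' b h h' => hR.2.2 a a' b h h'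
  have hr : ∀ a b, (EqvGen.setoid s).r a b ↔
      (Relation.ReflTransGen s a b ∨ Relation.ReflTransGen s b a) := by
    intro a b
    exact eqvGen_iff_reach hfun hinj
  constructor
  · rintro ⟨hij, hrel, hbet⟩
    have hreach : Relation.ReflTransGen s i j := by
      rcases (hr i j).1 hrel with h | h
      · exact h
      · exact absurd (reach_le hlt h) (not_le.2 hij)
    rcases Relation.ReflTransGen.cases_head hreach with heq | ⟨k, hk, hkj⟩
    · exact absurd heq (ne_of_lt hij)
    · have hk2 : k ≤ j := reach_le hlt hkj
      rcases eq_or_lt_of_le hk2 with rfl | hlt2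
      · exact hk
      · exact absurd ⟨hlt _ _ hk, hlt2⟩
          (hbet k ((hr i k).2 (Or.inl (Relation.ReflTransGen.single hk))))
  · intro hij
    refine ⟨hlt _ _ hij, (hr i j).2 (Or.inl (Relation.ReflTransGen.single hij)), ?_⟩
    rintro k hrel ⟨h1, h2⟩
    have hreach : Relation.ReflTransGen s i k := by
      rcases (hr i k).1 hrel with h | h
      · exact h
      · exact absurd (reach_le hlt h) (not_le.2 h1)
    rcases Relation.ReflTransGen.cases_head hreach with rfl | ⟨k', hk', hrest⟩
    · exact lt_irrefl _ h1
    · have : k' = j := hfun _ _ _ hk' hij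
      subst this
      exact absurd h2 (not_lt.2 (reach_le hlt hrest))

lemma arcMat_sub_diag (X : Setoid I) (α : I → I → F) (i : I) :
    (arcMat X α - 1) i i = 0 := by
  simp [arcMat, Matrix.sub_apply, Matrix.one_apply_eq]

lemma arcMat_sub_arc (X : Setoid I) (α : I → I → F) {i j : I} (ha : IsArc X i j) :
    (arcMat X α - 1) i j = α i j := by
  have hne : i ≠ j := ne_of_lt ha.1
  simp [arcMat, Matrix.sub_apply, Matrix.one_apply_ne hne, hne, ha]

lemma arcMat_sub_notarc (X : Setoid I) (α : I → I → F) {i j : I} (hne : i ≠ j)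
    (ha : ¬ IsArc X i j) : (arcMat X α - 1) i j = 0 := by
  simp [arcMat, Matrix.sub_apply, Matrix.one_apply_ne hne, hne, ha]

lemma arcMat_supp {X : Setoid I} {α : I → I → F} (hα : ∀ i j, IsArc X i j → α i j ≠ 0)
    (i j : I) : ((arcMat X α - 1) i j ≠ 0 ↔ IsArc X i j) := by
  by_cases h : i = j
  · subst h
    simp only [arcMat_sub_diag, ne_eq, not_true_eq_false, false_iff]
    rintro ⟨h1, -⟩
    exact lt_irrefl _ h1
  · by_cases ha : IsArc X i j
    · rw [arcMat_sub_arc X α ha]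
      simp [ha, hα i j ha]
    · rw [arcMat_sub_notarc X α h ha]
      simp [ha]

lemma rook_arcMat {X : Setoid I} {α : I → I → F} (hα : ∀ i j, IsArc X i j → α i j ≠ 0) :
    IsRook (arcMat X α - 1) := by
  have hiff := arcMat_supp hα
  refine ⟨?_, ?_, ?_⟩
  · intro i j hji
    by_contra hne
    have harc := (hiff i j).1 hne
    exact absurd harc.1 (not_lt.2 hji)
  · intro i j j' h1 h2
    have ha1 := (hiff i j).1 h1
    have ha2 := (hiff i j').1 h2
    by_contra hne
    rcases lt_or_gt_of_ne hne with h | h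
    · exact (ha2.2.2 j ha1.2.1) ⟨ha1.1, h⟩
    · exact (ha1.2.2 j' ha2.2.1) ⟨ha2.1, h⟩
  · intro i i' j h1 h2
    have ha1 := (hiff i j).1 h1
    have ha2 := (hiff i' j).1 h2
    by_contra hne
    rcases lt_or_gt_of_ne hne with h | h
    · exact (ha1.2.2 i' (X.iseqv.trans ha1.2.1 (X.iseqv.symm ha2.2.1))) ⟨h, ha2.1⟩
    · exact (ha2.2.2 i (X.iseqv.trans ha2.2.1 (X.iseqv.symm ha1.2.1))) ⟨h, ha1.1⟩

lemma mul_apply_eq_self_left {g' N : Matrix I I F} (hg' : IsUni g') (hN : IsRook N)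
    {i j : I} (hNij : N i j ≠ 0) : (g' * N) i j = N i j := by
  rw [Matrix.mul_apply, Finset.sum_eq_single i]
  · rw [hg'.1, one_mul]
  · intro k _ hk
    by_cases hz : N k j = 0
    · rw [hz, mul_zero]
    · exact absurd (hN.2.2 k i j hz hNij) hk
  · exact fun habs => absurd (Finset.mem_univ i) habs

lemma mul_apply_eq_self_right {M g : Matrix I I F} (hg : IsUni g) (hM : IsRook M)
    {i j : I} (hMij : M i j ≠ 0) : (g * M) i j = M i j := by
  rw [Matrix.mul_apply, Finset.sum_eq_single i]
  · rw [hg.1, one_mul]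
  · intro k _ hk
    by_cases hz : M k j = 0
    · rw [hz, mul_zero]
    · exact absurd (hM.2.2 k i j hz hMij) hk
  · exact fun habs => absurd (Finset.mem_univ i) habs

lemma supp_eq {M N g h : Matrix I I F} (hM : IsRook M) (hN : IsRook N)
    (hg : IsUni g) (hh : IsUni h) (hrel : N = g * M * h) :
    ∀ i j, (N i j ≠ 0 ↔ M i j ≠ 0) := by
  classical
  obtain ⟨g', hg', hgg', hg'g⟩ := uni_inv hg
  obtain ⟨h', hh', hhh', hh'h⟩ := uni_inv hh
  have e1 : g' * N = M * h := by
    rw [hrel, ← Matrix.mul_assoc, ← Matrix.mul_assoc, hg'g, Matrix.one_mul]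
  have e2 : N * h' = g * M := by
    rw [hrel, Matrix.mul_assoc, hhh', Matrix.mul_one]
  suffices H : ∀ (n : ℕ) (i j : I), (Finset.Icc i j).card ≤ n → (N i j ≠ 0 ↔ M i j ≠ 0) by
    intro i j
    exact H (Fintype.card I) i j (by simpa using Finset.card_le_univ (Finset.Icc i j))
  intro n
  induction n with
  | zero =>
    intro i j hc
    have hij : j < i := by
      by_contra hle
      have h1 : 0 < (Finset.Icc i j).card :=
        Finset.card_pos.2 ⟨i, Finset.mem_Icc.2 ⟨le_rfl, not_lt.1 hle⟩⟩
      omega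
    rw [hN.1 i j hij.le, hM.1 i j hij.le]
  | succ n ih =>
    intro i j hc
    constructor
    · intro hNij
      have hr : (M * h) i j ≠ 0 := by
        rw [← e1, mul_apply_eq_self_left hg' hN hNij]
        exact hNij
      rw [Matrix.mul_apply] at hr
      obtain ⟨l, _, hl⟩ := Finset.exists_ne_zero_of_sum_ne_zero hr
      have hMil : M i l ≠ 0 := fun e => hl (by rw [e, zero_mul])
      have hhlj : h l j ≠ 0 := fun e => hl (by rw [e, mul_zero])
      have hil : i < l := su_lt hM.1 hMil
      have hlj : l ≤ j := by
        by_contra hc2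
        exact hhlj (hh.2 l j (not_le.1 hc2))
      rcases eq_or_lt_of_le hlj with rfl | hlj'
      · exact hMil
      · have hcard : (Finset.Icc i l).card ≤ n := by
          have hsub : Finset.Icc i l ⊆ (Finset.Icc i j).erase j := by
            intro x hx
            have hx' := Finset.mem_Icc.1 hx
            exact Finset.mem_erase.2 ⟨ne_of_lt (lt_of_le_of_lt hx'.2 hlj'),
              Finset.mem_Icc.2 ⟨hx'.1, hx'.2.trans hlj'.le⟩⟩
          have h1 := Finset.card_le_card hsub
          rw [Finset.card_erase_of_mem
            (Finset.mem_Icc.2 ⟨(hil.trans hlj').le, le_rfl⟩)] at h1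
          omega
        have hNil : N i l ≠ 0 := (ih i l hcard).2 hMil
        exact absurd (hN.2.1 i l j hNil hNij) (ne_of_lt hlj')
    · intro hMij
      have hr : (N * h') i j ≠ 0 := by
        rw [e2, mul_apply_eq_self_right hg hM hMij]
        exact hMij
      rw [Matrix.mul_apply] at hr
      obtain ⟨k, _, hk⟩ := Finset.exists_ne_zero_of_sum_ne_zero hr
      have hNik : N i k ≠ 0 := fun e => hk (by rw [e, zero_mul])
      have hhkj : h' k j ≠ 0 := fun e => hk (by rw [e, mul_zero])
      have hik : i < k := su_lt hN.1 hNik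
      have hkj : k ≤ j := by
        by_contra hc2
        exact hhkj (hh'.2 k j (not_le.1 hc2))
      rcases eq_or_lt_of_le hkj with rfl | hkj'
      · exact hNik
      · have hcard : (Finset.Icc i k).card ≤ n := by
          have hsub : Finset.Icc i k ⊆ (Finset.Icc i j).erase j := by
            intro x hx
            have hx' := Finset.mem_Icc.1 hx
            exact Finset.mem_erase.2 ⟨ne_of_lt (lt_of_le_of_lt hx'.2 hkj'),
              Finset.mem_Icc.2 ⟨hx'.1, hx'.2.trans hkj'.le⟩⟩
          have h1 := Finset.card_le_card hsub
          rw [Finset.card_erase_of_mem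
            (Finset.mem_Icc.2 ⟨(hik.trans hkj').le, le_rfl⟩)] at h1
          omega
        have hMik : M i k ≠ 0 := (ih i k hcard).1 hNik
        exact absurd (hM.2.1 i k j hMik hMij) (ne_of_lt hkj')

lemma val_eq {M N g h : Matrix I I F} (hM : IsRook M) (hN : IsRook N)
    (hg : IsUni g) (hh : IsUni h) (hrel : N = g * M * h)
    {i j : I} (hMij : M i j ≠ 0) : N i j = M i j := by
  obtain ⟨g', hg', hgg', hg'g⟩ := uni_inv hg
  have e1 : g' * N = M * h := by
    rw [hrel, ← Matrix.mul_assoc, ← Matrix.mul_assoc, hg'g, Matrix.one_mul]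
  have hNij : N i j ≠ 0 := (supp_eq hM hN hg hh hrel i j).2 hMij
  have lhs : (g' * N) i j = N i j := mul_apply_eq_self_left hg' hN hNij
  have rhs : (M * h) i j = M i j := by
    rw [Matrix.mul_apply, Finset.sum_eq_single j]
    · rw [hh.1, mul_one]
    · intro l _ hl
      by_cases hz : M i l = 0
      · rw [hz, zero_mul]
      · exact absurd (hM.2.1 i l j hz hMij) hl
    · exact fun habs => absurd (Finset.mem_univ j) habs
  rw [← lhs, e1, rhs]

lemma setoid_r_iff_eqvGen_arc (X : Setoid I) :
    ∀ a b, X.r a b ↔ EqvGen (IsArc X) a b := by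
  classical
  have aux : ∀ (n : ℕ) (a b : I), a < b → (Finset.Ioo a b).card ≤ n → X.r a b →
      EqvGen (IsArc X) a b := by
    intro n
    induction n with
    | zero =>
      intro a b hab hcard hr
      refine EqvGen.rel _ _ ⟨hab, hr, ?_⟩
      rintro k _ ⟨h1, h2⟩
      have hmem : k ∈ Finset.Ioo a b := Finset.mem_Ioo.2 ⟨h1, h2⟩
      have := Finset.card_pos.2 ⟨k, hmem⟩
      omega
    | succ n ih =>
      intro a b hab hcard hr
      by_cases harc : IsArc X a b
      · exact EqvGen.rel _ _ harc
      · have h3 : ¬ ∀ k, X.r a k → ¬(a < k ∧ k < b) := fun hk => harc ⟨hab, hr, hk⟩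
        push_neg at h3
        obtain ⟨k, hk, h1, h2⟩ := h3
        have hkb : X.r k b := X.iseqv.trans (X.iseqv.symm hk) hr
        have hkmem : k ∈ Finset.Ioo a b := Finset.mem_Ioo.2 ⟨h1, h2⟩
        have c1 : (Finset.Ioo a k).card ≤ n := by
          have hsub : Finset.Ioo a k ⊆ (Finset.Ioo a b).erase k := by
            intro x hx
            have hx' := Finset.mem_Ioo.1 hx
            exact Finset.mem_erase.2 ⟨ne_of_lt hx'.2, Finset.mem_Ioo.2 ⟨hx'.1, hx'.2.trans h2⟩⟩
          have hle := Finset.card_le_card hsub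
          rw [Finset.card_erase_of_mem hkmem] at hle
          omega
        have c2 : (Finset.Ioo k b).card ≤ n := by
          have hsub : Finset.Ioo k b ⊆ (Finset.Ioo a b).erase k := by
            intro x hx
            have hx' := Finset.mem_Ioo.1 hx
            exact Finset.mem_erase.2 ⟨(ne_of_gt hx'.1),
              Finset.mem_Ioo.2 ⟨h1.trans hx'.1, hx'.2⟩⟩
          have hle := Finset.card_le_card hsub
          rw [Finset.card_erase_of_mem hkmem] at hle
          omega
        exact EqvGen.trans _ _ _ (ih a k h1 c1 hk) (ih k b h2 c2 hkb)
  intro a b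
  constructor
  · intro hr
    rcases lt_trichotomy a b with h | h | h
    · exact aux _ a b h le_rfl hr
    · subst h
      exact EqvGen.refl _
    · exact EqvGen.symm _ _ (aux _ b a h le_rfl (X.iseqv.symm hr))
  · intro h
    induction h with
    | rel a b hab => exact hab.2.1
    | refl a => exact X.iseqv.refl a
    | symm a b _ ih => exact X.iseqv.symm ih
    | trans a b c _ _ ih1 ih2 => exact X.iseqv.trans ih1 ih2

lemma setoid_eq_of_arcs {X Y : Setoid I} (h : ∀ i j, IsArc X i j ↔ IsArc Y i j) : X = Y := by
  have hXY : IsArc X = IsArc Y := by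
    funext a b
    exact propext (h a b)
  apply Setoid.ext
  intro a b
  constructor
  · intro hr
    exact (setoid_r_iff_eqvGen_arc Y a b).2 (hXY ▸ (setoid_r_iff_eqvGen_arc X a b).1 hr)
  · intro hr
    exact (setoid_r_iff_eqvGen_arc X a b).2 (hXY ▸ (setoid_r_iff_eqvGen_arc Y a b).1 hr)

end ArcProof

open ArcProof Relation

/-- Superclasses of `U(I,ℓ)` are in bijection with arc diagrams `(X, α)`:
every unitriangular matrix is superequivalent to some `U_{X,α}`, and two
canonical representatives are superequivalent only if their arc diagrams
coincide. -/
theorem superclasses_biject_with_arc_diagrams {I F : Type*}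
    [Fintype I] [LinearOrder I] [Field F] [Fintype F] :
    (∀ U : Matrix I I F, IsUni U →
      ∃ (X : Setoid I) (α : I → I → F),
        (∀ i j : I, IsArc X i j → α i j ≠ 0) ∧ matScRel (arcMat X α) U) ∧
    (∀ (X Y : Setoid I) (α β : I → I → F),
      (∀ i j : I, IsArc X i j → α i j ≠ 0) →
      (∀ i j : I, IsArc Y i j → β i j ≠ 0) →
      matScRel (arcMat X α) (arcMat Y β) →
      X = Y ∧ ∀ i j : I, IsArc X i j → α i j = β i j) := by
  constructor
  · -- existence
    intro U hU
    obtain ⟨g, h, hg, hh, hrook⟩ := reduce (Fintype.card I) (U - 1) (uni_sub_one_su hU)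
      (fun r _ => by simpa using Finset.card_le_univ (Finset.univ.filter (fun x => x ≤ r)))
    set R := g * (U - 1) * h with hR
    set X : Setoid I := EqvGen.setoid (fun a b => R a b ≠ 0) with hX
    refine ⟨X, fun i j => R i j, ?_, ?_⟩
    · intro i j harc
      exact (arc_iff_rook hrook).1 harc
    · obtain ⟨g', hg', hgg', hg'g⟩ := uni_inv hg
      obtain ⟨h', hh', hhh', hh'h⟩ := uni_inv hh
      refine ⟨g', h', hg', hh', ?_⟩
      have harcmat : arcMat X (fun i j => R i j) - 1 = R := by
        ext i j
        by_cases hij : i = j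
        · subst hij
          rw [arcMat_sub_diag]
          exact (hrook.1 _ _ le_rfl).symm
        · by_cases ha : IsArc X i j
          · rw [arcMat_sub_arc _ _ ha]
          · rw [arcMat_sub_notarc _ _ hij ha]
            by_contra hne
            have : R i j ≠ 0 := fun e => hne e.symm
            exact ha ((arc_iff_rook hrook).2 this)
      rw [harcmat, hR]
      rw [show g' * (g * (U - 1) * h) * h' = (g' * g) * (U - 1) * (h * h') from by
        simp only [Matrix.mul_assoc], hg'g, hhh', Matrix.one_mul, Matrix.mul_one]
  · -- uniqueness
    intro X Y α β hα hβ hrel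
    obtain ⟨g, h, hg, hh, heq⟩ := hrel
    have hMrook := rook_arcMat hα
    have hNrook := rook_arcMat hβ
    have hsupp := supp_eq hMrook hNrook hg hh heq
    have harcs : ∀ i j, IsArc X i j ↔ IsArc Y i j := by
      intro i j
      rw [← arcMat_supp hα i j, ← hsupp i j, arcMat_supp hβ i j]
    refine ⟨setoid_eq_of_arcs harcs, ?_⟩
    intro i j harc
    have harcY : IsArc Y i j := (harcs i j).1 harc
    have hM : (arcMat X α - 1) i j = α i j := arcMat_sub_arc X α harc
    have hN : (arcMat Y β - 1) i j = β i j := arcMat_sub_arc Y β harcY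
    have hMne : (arcMat X α - 1) i j ≠ 0 := by
      rw [hM]; exact hα i j harc
    have := val_eq hMrook hNrook hg hh heq hMne
    rw [hM, hN] at this
    exact this.symm
end

section
/- The Bell numbers B_n (number of set partitions of [n]) and the numbers A_n of atomic set partitions of the linearly ordered set [n] satisfy the generating function identity ∑_{n≥0} B_n x^n = 1 / (1 − ∑_{n≥1} A_n x^n). Equivalently, B_n = ∑_{k≥1} ∑ A_{n₁}⋯A_{n_k} summed over compositions n₁+⋯+n_k = n with each nᵢ ≥ 1. -/
def IsAtomicPartition {n : ℕ} (X : Setoid (Fin n)) : Prop :=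
  ∀ m : ℕ, 0 < m → m < n →
    ¬ (∀ i j : Fin n, X.r i j → ((i : ℕ) < m ↔ (j : ℕ) < m))

namespace BellAtomic

def emb (n m : ℕ) (i : Fin (n - m)) : Fin n := ⟨m + i.1, by have := i.isLt; omega⟩

@[simp] lemma emb_val (n m : ℕ) (i : Fin (n - m)) : (emb n m i : ℕ) = m + i.1 := rfl

def segProp {n : ℕ} (X : Setoid (Fin n)) (m : ℕ) : Prop :=
  ∀ i j : Fin n, X.r i j → ((i : ℕ) < m ↔ (j : ℕ) < m)

lemma segProp_of_le {n m : ℕ} (X : Setoid (Fin n)) (h : n ≤ m) : segProp X m :=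
  fun i j _ => iff_of_true (lt_of_lt_of_le i.isLt h) (lt_of_lt_of_le j.isLt h)

def left {n m : ℕ} (h : m ≤ n) (X : Setoid (Fin n)) : Setoid (Fin m) :=
  Setoid.comap (Fin.castLE h) X

def right {n : ℕ} (m : ℕ) (X : Setoid (Fin n)) : Setoid (Fin (n - m)) :=
  Setoid.comap (emb n m) X

def combine {n m : ℕ} (Y : Setoid (Fin m)) (Z : Setoid (Fin (n - m))) : Setoid (Fin n) where
  r i j := (∃ (hi : (i : ℕ) < m) (hj : (j : ℕ) < m), Y.r ⟨i, hi⟩ ⟨j, hj⟩) ∨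
    (∃ (_ : m ≤ (i : ℕ)) (_ : m ≤ (j : ℕ)),
      Z.r ⟨(i : ℕ) - m, by have := i.isLt; omega⟩ ⟨(j : ℕ) - m, by have := j.isLt; omega⟩)
  iseqv := by
    constructor
    · intro i
      by_cases h : (i : ℕ) < m
      · exact Or.inl ⟨h, h, Y.refl _⟩
      · exact Or.inr ⟨le_of_not_gt h, le_of_not_gt h, Z.refl _⟩
    · rintro i j (⟨hi, hj, h⟩ | ⟨hi, hj, h⟩)
      · exact Or.inl ⟨hj, hi, Y.symm h⟩
      · exact Or.inr ⟨hj, hi, Z.symm h⟩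
    · rintro i j k (⟨hi, hj, h⟩ | ⟨hi, hj, h⟩) (⟨hj', hk, h'⟩ | ⟨hj', hk, h'⟩)
      · exact Or.inl ⟨hi, hk, Y.trans h h'⟩
      · omega
      · omega
      · exact Or.inr ⟨hi, hk, Z.trans h h'⟩

lemma segProp_combine {n m : ℕ} (Y : Setoid (Fin m)) (Z : Setoid (Fin (n - m))) :
    segProp (combine Y Z) m := by
  rintro i j (⟨hi, hj, -⟩ | ⟨hi, hj, -⟩) <;> omega

lemma segProp_combine_imp {n m k : ℕ} (h : m ≤ n) (Y : Setoid (Fin m)) (Z : Setoid (Fin (n - m)))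
    (hk : k ≤ m) (hsp : segProp (combine Y Z) k) : segProp Y k := by
  intro i j hr
  have := hsp ⟨i.1, lt_of_lt_of_le i.isLt h⟩ ⟨j.1, lt_of_lt_of_le j.isLt h⟩
    (Or.inl ⟨i.isLt, j.isLt, hr⟩)
  simpa using this

lemma left_combine {n m : ℕ} (h : m ≤ n) (Y : Setoid (Fin m)) (Z : Setoid (Fin (n - m))) :
    left h (combine Y Z) = Y := by
  apply Setoid.ext
  intro i j
  constructor
  · rintro (⟨hi, hj, hr⟩ | ⟨hi, hj, -⟩)
    · exact hr
    · simp only [Fin.coe_castLE] at hi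
      exact absurd hi (by have := i.isLt; omega)
  · intro hr
    exact Or.inl ⟨i.isLt, j.isLt, hr⟩

lemma right_combine {n m : ℕ} (Y : Setoid (Fin m)) (Z : Setoid (Fin (n - m))) :
    right m (combine Y Z) = Z := by
  apply Setoid.ext
  intro i j
  show (combine Y Z).r (emb n m i) (emb n m j) ↔ Z.r i j
  constructor
  · rintro (⟨hi, -, -⟩ | ⟨hi, hj, hr⟩)
    · simp at hi
    · convert hr using 2 <;> simp
  · intro hr
    refine Or.inr ⟨by simp, by simp, ?_⟩
    convert hr using 2 <;> simp

lemma combine_left_right {n m : ℕ} (h : m ≤ n) (X : Setoid (Fin n)) (hseg : segProp X m) :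
    combine (left h X) (right m X) = X := by
  apply Setoid.ext
  intro i j
  constructor
  · rintro (⟨hi, hj, hr⟩ | ⟨hi, hj, hr⟩)
    · exact hr
    · have e1 : emb n m ⟨(i : ℕ) - m, by have := i.isLt; omega⟩ = i :=
        Fin.ext (show m + ((i : ℕ) - m) = (i : ℕ) by omega)
      have e2 : emb n m ⟨(j : ℕ) - m, by have := j.isLt; omega⟩ = j :=
        Fin.ext (show m + ((j : ℕ) - m) = (j : ℕ) by omega)
      have hr' : X.r (emb n m ⟨(i : ℕ) - m, by have := i.isLt; omega⟩)
          (emb n m ⟨(j : ℕ) - m, by have := j.isLt; omega⟩) := hr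
      rwa [e1, e2] at hr'
  · intro hr
    by_cases hi : (i : ℕ) < m
    · have hj : (j : ℕ) < m := (hseg i j hr).1 hi
      exact Or.inl ⟨hi, hj, hr⟩
    · have hj : ¬ (j : ℕ) < m := fun hj => hi ((hseg i j hr).2 hj)
      refine Or.inr ⟨le_of_not_gt hi, le_of_not_gt hj, ?_⟩
      show X.r (emb n m ⟨(i : ℕ) - m, by have := i.isLt; omega⟩)
        (emb n m ⟨(j : ℕ) - m, by have := j.isLt; omega⟩)
      have e1 : emb n m ⟨(i : ℕ) - m, by have := i.isLt; omega⟩ = i :=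
        Fin.ext (show m + ((i : ℕ) - m) = (i : ℕ) by omega)
      have e2 : emb n m ⟨(j : ℕ) - m, by have := j.isLt; omega⟩ = j :=
        Fin.ext (show m + ((j : ℕ) - m) = (j : ℕ) by omega)
      rw [e1, e2]
      exact hr

lemma atomic_left {n m : ℕ} (h : m ≤ n) (X : Setoid (Fin n)) (hseg : segProp X m)
    (hmin : ∀ k, 0 < k → k < m → ¬ segProp X k) : IsAtomicPartition (left h X) := by
  intro m' h0 hm' hsp
  apply hmin m' h0 hm'
  intro i j hr
  by_cases hi : (i : ℕ) < m
  · have hj : (j : ℕ) < m := (hseg i j hr).1 hi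
    have := hsp ⟨i.1, hi⟩ ⟨j.1, hj⟩ hr
    simpa using this
  · have hj : ¬ (j : ℕ) < m := fun hj => hi ((hseg i j hr).2 hj)
    omega

instance : Unique (Setoid (Fin 0)) where
  default := ⊤
  uniq X := Setoid.ext fun i => i.elim0

lemma card_zero : Nat.card (Setoid (Fin 0)) = 1 := Nat.card_unique

noncomputable instance setoidFinite (n : ℕ) : Fintype (Setoid (Fin n)) := by
  have : Finite (Setoid (Fin n)) := by
    apply Finite.of_injective (fun X : Setoid (Fin n) => X.r)
    intro a b hab
    apply Setoid.ext
    intro x y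
    rw [show a.r = b.r from hab]
  exact Fintype.ofFinite _

def theBij (n : ℕ) :
    (Σ m : Fin n, {Y : Setoid (Fin (m.1 + 1)) // IsAtomicPartition Y} ×
      Setoid (Fin (n - (m.1 + 1)))) → Setoid (Fin n) :=
  fun p => combine p.2.1.1 p.2.2

lemma theBij_bijective (n : ℕ) (hn : 0 < n) : Function.Bijective (theBij n) := by
  constructor
  · -- injective
    have key : ∀ (m m' : Fin n) (Y : {Y : Setoid (Fin (m.1 + 1)) // IsAtomicPartition Y})
        (Z : Setoid (Fin (n - (m.1 + 1))))
        (Y' : {Y : Setoid (Fin (m'.1 + 1)) // IsAtomicPartition Y})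
        (Z' : Setoid (Fin (n - (m'.1 + 1)))),
        combine Y.1 Z = combine Y'.1 Z' → m.1 < m'.1 → False := by
      intro m m' Y Z Y' Z' heq hlt
      have h1 : segProp (combine Y'.1 Z') (m.1 + 1) := heq ▸ segProp_combine Y.1 Z
      have h2 : segProp Y'.1 (m.1 + 1) :=
        segProp_combine_imp (by have := m'.isLt; omega) Y'.1 Z' (by omega) h1
      exact Y'.2 (m.1 + 1) (by omega) (by omega) h2
    rintro ⟨m, Y, Z⟩ ⟨m', Y', Z'⟩ heq
    have hmm : m = m' := by
      rcases lt_trichotomy m.1 m'.1 with h | h | h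
      · exact absurd (key m m' Y Z Y' Z' heq h) id
      · exact Fin.ext h
      · exact absurd (key m' m Y' Z' Y Z heq.symm h) id
    subst hmm
    have heq' : combine Y.1 Z = combine Y'.1 Z' := heq
    have hY : Y.1 = Y'.1 := by
      rw [← left_combine (n := n) (by have := m.isLt; omega) Y.1 Z,
        show combine Y.1 Z = _ from heq', left_combine]
    have hZ : Z = Z' := by
      rw [← right_combine (n := n) Y.1 Z, show combine Y.1 Z = _ from heq', right_combine]
    simp [Subtype.ext hY, hZ]
  · -- surjective
    intro X
    have hex : ∃ k, segProp X (k + 1) := ⟨n - 1, segProp_of_le X (by omega)⟩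
    classical
    have hspec : segProp X (Nat.find hex + 1) := Nat.find_spec hex
    have hkn : Nat.find hex ≤ n - 1 := Nat.find_le (segProp_of_le X (by omega))
    have hkn' : Nat.find hex + 1 ≤ n := by omega
    refine ⟨⟨⟨Nat.find hex, by omega⟩, ⟨⟨left hkn' X, ?_⟩, right (Nat.find hex + 1) X⟩⟩,
      combine_left_right hkn' X hspec⟩
    apply atomic_left hkn' X hspec
    intro j h0 hj hsp
    exact Nat.find_min hex (m := j - 1) (by omega)
      (by simpa [Nat.sub_add_cancel h0] using hsp)

lemma card_sigma_eq {n : ℕ} (T : Fin n → Type*) [∀ i, Finite (T i)] :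
    Nat.card (Σ i, T i) = ∑ i, Nat.card (T i) := by
  classical
  letI : ∀ i, Fintype (T i) := fun i => Fintype.ofFinite _
  simp [Nat.card_eq_fintype_card, Fintype.card_sigma]

lemma card_rec (n : ℕ) (hn : 0 < n) :
    Nat.card (Setoid (Fin n)) =
      ∑ m ∈ Finset.range n,
        Nat.card {Y : Setoid (Fin (m + 1)) // IsAtomicPartition Y} *
          Nat.card (Setoid (Fin (n - (m + 1)))) := by
  rw [← Nat.card_eq_of_bijective _ (theBij_bijective n hn)]
  rw [card_sigma_eq]
  rw [← Fin.sum_univ_eq_sum_range (fun m =>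
    Nat.card {Y : Setoid (Fin (m + 1)) // IsAtomicPartition Y} *
      Nat.card (Setoid (Fin (n - (m + 1)))))]
  exact Finset.sum_congr rfl fun m _ => Nat.card_prod _ _

end BellAtomic

/-- The generating function identity `∑ B_n x^n = 1 / (1 - ∑_{n ≥ 1} A_n x^n)`
relating the Bell numbers `B_n` (counting set partitions of `[n]`) and the
numbers `A_n` of atomic set partitions of the linearly ordered set `[n]`. -/
theorem bell_atomic_generating_function :
    (PowerSeries.mk fun n => (Nat.card (Setoid (Fin n)) : ℚ)) *
      (1 - PowerSeries.mk fun n =>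
        if n = 0 then 0
        else (Nat.card {X : Setoid (Fin n) // IsAtomicPartition X} : ℚ)) = 1 := by
  ext n
  set b : ℕ → ℚ := fun n => (Nat.card (Setoid (Fin n)) : ℚ) with hb
  set a : ℕ → ℚ := fun n => if n = 0 then 0
    else (Nat.card {X : Setoid (Fin n) // IsAtomicPartition X} : ℚ) with ha
  rw [mul_sub, mul_one, map_sub, PowerSeries.coeff_one, PowerSeries.coeff_mk,
    PowerSeries.coeff_mul]
  rw [Finset.Nat.sum_antidiagonal_eq_sum_range_succ_mk]
  simp only [PowerSeries.coeff_mk]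
  rcases Nat.eq_zero_or_pos n with rfl | hn
  · have hb0 : b 0 = 1 := by simp only [hb, BellAtomic.card_zero, Nat.cast_one]
    have ha0 : a 0 = 0 := by simp [ha]
    simp [hb0, ha0]
  · rw [if_neg hn.ne']
    rw [Finset.sum_range_succ]
    have h0 : a (n - n) = 0 := by simp [ha]
    rw [h0, mul_zero, add_zero]
    have hbn : b n = ∑ m ∈ Finset.range n, a (m + 1) * b (n - (m + 1)) := by
      rw [hb]
      simp only []
      rw [BellAtomic.card_rec n hn]
      push_cast
      refine Finset.sum_congr rfl fun m hm => ?_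
      simp [ha, hb]
    have hsum : ∑ k ∈ Finset.range n, b k * a (n - k)
        = ∑ m ∈ Finset.range n, a (m + 1) * b (n - (m + 1)) := by
      rw [← Finset.sum_range_reflect]
      refine Finset.sum_congr rfl fun m hm => ?_
      simp only [Finset.mem_range] at hm
      rw [show n - 1 - m = n - (m + 1) by omega, show n - (n - (m + 1)) = m + 1 by omega,
        mul_comm]
    rw [hsum, hbn, sub_self]
end
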